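/- arXiv:2605.07322 — 6 statements merged into one kernel-verified Lean document; each statement's English description precedes it below -/
import Mathlib

section
/- Let s and t be fixed integers with 3 ≤ s ≤ t, where s is odd and t is even with t ≥ 8. Then for all sufficiently large n, the odd-Ramsey number of K_{s,t} satisfies r_odd(n, K_{s,t}) > n^{1/(s/2 + 1/(2·⌊t/8⌋))}. -/
open Finset

open Finset

lemma odd_ramsey_greedy_pairs {V P : Type*} [DecidableEq V] [DecidableEq P] (p : V → P) :
    ∀ (j : ℕ) (F : Finset P) (E : Finset V),
      (∀ v ∈ E, p v ∈ F) →
      j ≤ ∑ π ∈ F, (E.filter (fun v => p v = π)).card / 2 →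
      ∃ B : Finset V, B ⊆ E ∧ B.card = 2 * j ∧
        ∀ (q : V → Prop) (_ : DecidablePred q),
          (∀ u v, p u = p v → (q u ↔ q v)) → Even (B.filter q).card := by
  intro j
  induction j with
  | zero =>
    intro F E _ _
    exact ⟨∅, empty_subset _, by simp, fun q _ _ => by simp⟩
  | succ j ih =>
    intro F E hEF hsum
    have hex : ∃ π ∈ F, 2 ≤ (E.filter (fun v => p v = π)).card := by
      by_contra h
      push_neg at h
      have hz : ∑ π ∈ F, (E.filter (fun v => p v = π)).card / 2 = 0 := by
        refine Finset.sum_eq_zero fun π hπ => ?_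
        have := h π hπ; omega
      omega
    obtain ⟨π, hπF, hπ2⟩ := hex
    obtain ⟨u, hu, v, hv, huv⟩ := Finset.one_lt_card.mp hπ2
    have hu' := Finset.mem_filter.mp hu
    have hv' := Finset.mem_filter.mp hv
    set E' := (E.erase u).erase v with hE'
    have hE'sub : E' ⊆ E := (erase_subset _ _).trans (erase_subset _ _)
    have hmemE' : ∀ w, w ∈ E' ↔ (w ∈ E ∧ w ≠ u ∧ w ≠ v) := by
      intro w
      simp only [hE', mem_erase]
      tauto
    have hfilterE' : ∀ π', (E'.filter (fun w => p w = π'))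
        = ((E.filter (fun w => p w = π')).erase u).erase v := by
      intro π'
      ext w
      simp only [mem_filter, mem_erase, hmemE']
      tauto
    have hcard_ne : ∀ π', π' ≠ π →
        (E'.filter (fun w => p w = π')).card = (E.filter (fun w => p w = π')).card := by
      intro π' hne
      have hun : u ∉ E.filter (fun w => p w = π') := by
        intro hmem
        exact hne (by rw [← (Finset.mem_filter.mp hmem).2, hu'.2])
      have hvn : v ∉ E.filter (fun w => p w = π') := by
        intro hmem
        exact hne (by rw [← (Finset.mem_filter.mp hmem).2, hv'.2])
      have : (E'.filter (fun w => p w = π')) = (E.filter (fun w => p w = π')) := by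
        rw [hfilterE', Finset.erase_eq_of_notMem hun, Finset.erase_eq_of_notMem hvn]
      rw [this]
    have hcard_pi : (E'.filter (fun w => p w = π)).card + 2
        = (E.filter (fun w => p w = π)).card := by
      rw [hfilterE']
      rw [Finset.card_erase_of_mem (Finset.mem_erase.mpr ⟨Ne.symm huv, hv⟩),
        Finset.card_erase_of_mem hu]
      omega
    -- rebuild the sum
    have hsum' : j ≤ ∑ π' ∈ F, (E'.filter (fun w => p w = π')).card / 2 := by
      have h1 : ∑ π' ∈ F.erase π, (E'.filter (fun w => p w = π')).card / 2
          = ∑ π' ∈ F.erase π, (E.filter (fun w => p w = π')).card / 2 := by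
        refine Finset.sum_congr rfl fun π' hπ' => ?_
        rw [hcard_ne π' (Finset.mem_erase.mp hπ').1]
      have h2 := Finset.sum_erase_add F
        (fun π' => (E'.filter (fun w => p w = π')).card / 2) hπF
      have h3 := Finset.sum_erase_add F
        (fun π' => (E.filter (fun w => p w = π')).card / 2) hπF
      have h4 : (E'.filter (fun w => p w = π)).card / 2 + 1
          = (E.filter (fun w => p w = π)).card / 2 := by omega
      beta_reduce at h2 h3
      omega
    have hEF' : ∀ w ∈ E', p w ∈ F := fun w hw => hEF w (hE'sub hw)
    obtain ⟨B', hB'sub, hB'card, hB'even⟩ := ih F E' hEF' hsum'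
    have huB' : u ∉ B' := fun h => ((hmemE' u).mp (hB'sub h)).2.1 rfl
    have hvB' : v ∉ B' := fun h => ((hmemE' v).mp (hB'sub h)).2.2 rfl
    refine ⟨insert u (insert v B'), ?_, ?_, ?_⟩
    · intro w hw
      rcases Finset.mem_insert.mp hw with rfl | hw
      · exact hu'.1
      rcases Finset.mem_insert.mp hw with rfl | hw
      · exact hv'.1
      exact hE'sub (hB'sub hw)
    · rw [Finset.card_insert_of_notMem, Finset.card_insert_of_notMem hvB']
      · omega
      · intro h
        rcases Finset.mem_insert.mp h with h | h
        · exact huv h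
        · exact huB' h
    · intro q hq hcompat
      have hquv : q u ↔ q v := hcompat u v (hu'.2.trans hv'.2.symm)
      rw [Finset.filter_insert, Finset.filter_insert]
      by_cases hqu : q u
      · rw [if_pos hqu, if_pos (hquv.mp hqu)]
        rw [Finset.card_insert_of_notMem, Finset.card_insert_of_notMem]
        · obtain ⟨m, hm⟩ := hB'even q hq hcompat
          exact ⟨m + 1, by omega⟩
        · intro h; exact hvB' (Finset.mem_filter.mp h).1
        · intro h
          rcases Finset.mem_insert.mp h with h | h
          · exact huv h
          · exact huB' (Finset.mem_filter.mp h).1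
      · rw [if_neg hqu, if_neg (fun h => hqu (hquv.mpr h))]
        exact hB'even q hq hcompat


lemma odd_ramsey_card_left {α β : Type*} [DecidableEq α] [DecidableEq β]
    (S : Finset α) (T : Finset β) (Φ : α × β → Prop) [DecidablePred Φ] :
    ((S ×ˢ T).filter Φ).card = ∑ x ∈ S, (T.filter (fun y => Φ (x, y))).card := by
  rw [Finset.card_eq_sum_card_fiberwise (f := Prod.fst) (t := S)
    (fun z hz => (Finset.mem_product.mp (Finset.mem_filter.mp hz).1).1)]
  refine Finset.sum_congr rfl fun x hx => ?_
  have he : ((S ×ˢ T).filter Φ).filter (fun z => z.1 = x)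
      = {x} ×ˢ (T.filter (fun y => Φ (x, y))) := by
    ext ⟨a, b⟩
    simp only [Finset.mem_filter, Finset.mem_product, Finset.mem_singleton]
    constructor
    · rintro ⟨⟨⟨haS, hbT⟩, hΦ⟩, rfl⟩; exact ⟨rfl, hbT, hΦ⟩
    · rintro ⟨rfl, hbT, hΦ⟩; exact ⟨⟨⟨hx, hbT⟩, hΦ⟩, rfl⟩
  rw [he, Finset.singleton_product, Finset.card_map]

lemma odd_ramsey_card_right {α β : Type*} [DecidableEq α] [DecidableEq β]
    (S : Finset α) (T : Finset β) (Φ : α × β → Prop) [DecidablePred Φ] :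
    ((S ×ˢ T).filter Φ).card = ∑ y ∈ T, (S.filter (fun x => Φ (x, y))).card := by
  rw [Finset.card_eq_sum_card_fiberwise (f := Prod.snd) (t := T)
    (fun z hz => (Finset.mem_product.mp (Finset.mem_filter.mp hz).1).2)]
  refine Finset.sum_congr rfl fun y hy => ?_
  have he : ((S ×ˢ T).filter Φ).filter (fun z => z.2 = y)
      = (S.filter (fun x => Φ (x, y))) ×ˢ {y} := by
    ext ⟨a, b⟩
    simp only [Finset.mem_filter, Finset.mem_product, Finset.mem_singleton]
    constructor
    · rintro ⟨⟨⟨haS, hbT⟩, hΦ⟩, rfl⟩; exact ⟨⟨haS, hΦ⟩, rfl⟩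
    · rintro ⟨⟨haS, hΦ⟩, rfl⟩; exact ⟨⟨⟨haS, hy⟩, hΦ⟩, rfl⟩
  rw [he, Finset.product_singleton, Finset.card_map]

lemma odd_ramsey_offdiag_classes {V P : Type*} [DecidableEq V] [DecidableEq P]
    (E : Finset V) (p : V → P) (F : Finset P) (hF : ∀ v ∈ E, p v ∈ F) :
    (E.offDiag.filter (fun z => p z.1 = p z.2)).card
      = ∑ π ∈ F, ((E.filter (fun v => p v = π)).card * (E.filter (fun v => p v = π)).card
          - (E.filter (fun v => p v = π)).card) := by
  rw [Finset.card_eq_sum_card_fiberwise (f := fun z => p z.1) (t := F)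
    (fun z hz => hF z.1 (Finset.mem_offDiag.mp (Finset.mem_filter.mp hz).1).1)]
  refine Finset.sum_congr rfl fun π hπ => ?_
  have he : (E.offDiag.filter (fun z => p z.1 = p z.2)).filter (fun z => p z.1 = π)
      = (E.filter (fun v => p v = π)).offDiag := by
    ext ⟨u, v⟩
    simp only [Finset.mem_filter, Finset.mem_offDiag]
    constructor
    · rintro ⟨⟨⟨huE, hvE, huv⟩, hpe⟩, hpπ⟩
      exact ⟨⟨huE, hpπ⟩, ⟨hvE, hpe ▸ hpπ⟩, huv⟩
    · rintro ⟨⟨huE, hpu⟩, ⟨hvE, hpv⟩, huv⟩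
      exact ⟨⟨⟨huE, hvE, huv⟩, hpu.trans hpv.symm⟩, hpu⟩
  rw [he, Finset.offDiag_card]


def oddRamseyProfile {n r : ℕ} (χ : Sym2 (Fin n) → Fin r) (c0 : Fin r)
    (A : Finset (Fin n)) (b : Fin n) : Fin n → Fin r :=
  fun a => if a ∈ A then χ s(a, b) else c0

lemma oddRamseyProfile_eq_iff {n r : ℕ} (χ : Sym2 (Fin n) → Fin r) (c0 : Fin r)
    (A : Finset (Fin n)) (u v : Fin n) :
    oddRamseyProfile χ c0 A u = oddRamseyProfile χ c0 A v
      ↔ ∀ a ∈ A, χ s(a, u) = χ s(a, v) := by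
  constructor
  · intro h a ha
    have := congrFun h a
    simpa [oddRamseyProfile, if_pos ha] using this
  · intro h
    funext a
    by_cases ha : a ∈ A
    · simpa [oddRamseyProfile, if_pos ha] using h a ha
    · simp [oddRamseyProfile, if_neg ha]

lemma odd_ramsey_card_left' {α β : Type*} [DecidableEq α] [DecidableEq β]
    (S : Finset α) (T : Finset β) (Q : α → β → Prop) [∀ a b, Decidable (Q a b)] :
    ((S ×ˢ T).filter (fun z => Q z.1 z.2)).card
      = ∑ x ∈ S, (T.filter (fun y => Q x y)).card := by
  rw [odd_ramsey_card_left S T (fun z => Q z.1 z.2)]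

lemma odd_ramsey_perA {n r s t : ℕ} (ht : 8 ≤ t) (hteven : Even t)
    (χ : Sym2 (Fin n) → Fin r) (c0 : Fin r)
    (A : Finset (Fin n)) (hA : A.card = s)
    (hgood : ∀ B : Finset (Fin n), Disjoint A B → B.card = t →
        ∃ c : Fin r, Odd (((A ×ˢ B).filter (fun z => χ s(z.1, z.2) = c)).card)) :
    ((Aᶜ.offDiag).filter (fun z =>
        oddRamseyProfile χ c0 A z.1 = oddRamseyProfile χ c0 A z.2)).card ≤ 9 * (t * t) := by
  classical
  set p := oddRamseyProfile χ c0 A with hp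
  set F := Aᶜ.image p with hF
  set m := ∑ π ∈ F, (Aᶜ.filter (fun v => p v = π)).card / 2 with hm
  have hmlt : ¬ (t / 2 ≤ m) := by
    intro hge
    obtain ⟨B, hBsub, hBcard, hBeven⟩ := odd_ramsey_greedy_pairs p (t / 2) F Aᶜ
      (fun v hv => Finset.mem_image_of_mem p hv) hge
    have hBcard' : B.card = t := by
      rw [hBcard, Nat.mul_div_cancel' hteven.two_dvd]
    have hdisj : Disjoint A B := by
      rw [Finset.disjoint_right]
      intro b hb
      exact fun hbA => (Finset.mem_compl.mp (hBsub hb)) hbA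
    obtain ⟨c, hodd⟩ := hgood B hdisj hBcard'
    have heven : Even (((A ×ˢ B).filter (fun z => χ s(z.1, z.2) = c)).card) := by
      rw [odd_ramsey_card_left' A B (fun a b => χ s(a, b) = c)]
      refine Finset.sum_induction _ Even (fun _ _ => Even.add) Even.zero ?_
      intro a ha
      refine hBeven (fun b => χ s(a, b) = c) inferInstance ?_
      intro u v huv
      have := (oddRamseyProfile_eq_iff χ c0 A u v).mp huv a ha
      simp only [this]
    exact (Nat.not_odd_iff_even.mpr heven) hodd
  have hcard : ((Aᶜ.offDiag).filter (fun z => p z.1 = p z.2)).card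
      = ∑ π ∈ F, ((Aᶜ.filter (fun v => p v = π)).card * (Aᶜ.filter (fun v => p v = π)).card
          - (Aᶜ.filter (fun v => p v = π)).card) := by
    exact odd_ramsey_offdiag_classes Aᶜ p F (fun v hv => Finset.mem_image_of_mem p hv)
  rw [hcard]
  have hpt : ∀ π ∈ F, (Aᶜ.filter (fun v => p v = π)).card * (Aᶜ.filter (fun v => p v = π)).card
      - (Aᶜ.filter (fun v => p v = π)).card
      ≤ 9 * (((Aᶜ.filter (fun v => p v = π)).card / 2) * ((Aᶜ.filter (fun v => p v = π)).card / 2)) := by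
    intro π _
    set c := (Aᶜ.filter (fun v => p v = π)).card
    rcases Nat.lt_or_ge c 2 with h | h
    · interval_cases c <;> simp
    · have h3 : c ≤ 3 * (c / 2) := by omega
      calc c * c - c ≤ c * c := Nat.sub_le _ _
        _ ≤ (3 * (c / 2)) * (3 * (c / 2)) := Nat.mul_le_mul h3 h3
        _ = 9 * ((c / 2) * (c / 2)) := by ring
  calc ∑ π ∈ F, ((Aᶜ.filter (fun v => p v = π)).card * (Aᶜ.filter (fun v => p v = π)).card
          - (Aᶜ.filter (fun v => p v = π)).card)
      ≤ ∑ π ∈ F, 9 * (((Aᶜ.filter (fun v => p v = π)).card / 2)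
          * ((Aᶜ.filter (fun v => p v = π)).card / 2)) := Finset.sum_le_sum hpt
    _ = 9 * ∑ π ∈ F, ((Aᶜ.filter (fun v => p v = π)).card / 2)
          * ((Aᶜ.filter (fun v => p v = π)).card / 2) := by rw [Finset.mul_sum]
    _ ≤ 9 * (m * m) := by
        have : ∑ π ∈ F, ((Aᶜ.filter (fun v => p v = π)).card / 2)
            * ((Aᶜ.filter (fun v => p v = π)).card / 2) ≤ m * m := by
          calc ∑ π ∈ F, ((Aᶜ.filter (fun v => p v = π)).card / 2)
              * ((Aᶜ.filter (fun v => p v = π)).card / 2)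
              ≤ ∑ π ∈ F, ((Aᶜ.filter (fun v => p v = π)).card / 2) * m := by
                refine Finset.sum_le_sum fun π hπ => ?_
                refine Nat.mul_le_mul_left _ ?_
                rw [hm]
                exact Finset.single_le_sum (f := fun π => (Aᶜ.filter (fun v => p v = π)).card / 2)
                  (fun _ _ => Nat.zero_le _) hπ
            _ = m * m := by rw [← Finset.sum_mul]
        exact Nat.mul_le_mul_left 9 this
    _ ≤ 9 * (t * t) := by
        have hmt : m ≤ t := by omega
        exact Nat.mul_le_mul_left 9 (Nat.mul_le_mul hmt hmt)

open Finset

def oddRamseyAgr {n r : ℕ} (χ : Sym2 (Fin n) → Fin r) (uv : Fin n × Fin n) : Finset (Fin n) :=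
  univ.filter (fun w => uv.1 ≠ w ∧ uv.2 ≠ w ∧ χ s(w, uv.1) = χ s(w, uv.2))

lemma odd_ramsey_card_right' {α β : Type*} [DecidableEq α] [DecidableEq β]
    (S : Finset α) (T : Finset β) (Q : α → β → Prop) [∀ a b, Decidable (Q a b)] :
    ((S ×ˢ T).filter (fun z => Q z.1 z.2)).card
      = ∑ y ∈ T, (S.filter (fun x => Q x y)).card := by
  rw [odd_ramsey_card_right S T (fun z => Q z.1 z.2)]

lemma odd_ramsey_double_count {n r s t : ℕ}
    (χ : Sym2 (Fin n) → Fin r) (c0 : Fin r)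
    (hperA : ∀ A : Finset (Fin n), A.card = s →
      ((Aᶜ.offDiag).filter (fun z =>
        oddRamseyProfile χ c0 A z.1 = oddRamseyProfile χ c0 A z.2)).card ≤ 9 * (t * t)) :
    ∑ uv ∈ (univ : Finset (Fin n)).offDiag, (oddRamseyAgr χ uv).card.choose s
      ≤ n.choose s * (9 * (t * t)) := by
  classical
  have key := odd_ramsey_card_left' (univ : Finset (Fin n)).offDiag
      (powersetCard s (univ : Finset (Fin n)))
      (fun uv A => ∀ a ∈ A, uv.1 ≠ a ∧ uv.2 ≠ a ∧ χ s(a, uv.1) = χ s(a, uv.2))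
  have key2 := odd_ramsey_card_right' (univ : Finset (Fin n)).offDiag
      (powersetCard s (univ : Finset (Fin n)))
      (fun uv A => ∀ a ∈ A, uv.1 ≠ a ∧ uv.2 ≠ a ∧ χ s(a, uv.1) = χ s(a, uv.2))
  -- identify the left fibers
  have hfib1 : ∀ uv ∈ (univ : Finset (Fin n)).offDiag,
      ((powersetCard s (univ : Finset (Fin n))).filter
        (fun A => ∀ a ∈ A, uv.1 ≠ a ∧ uv.2 ≠ a ∧ χ s(a, uv.1) = χ s(a, uv.2)))
      = powersetCard s (oddRamseyAgr χ uv) := by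
    intro uv _
    ext A
    simp only [Finset.mem_filter, Finset.mem_powersetCard, oddRamseyAgr]
    constructor
    · rintro ⟨⟨-, hcard⟩, hall⟩
      refine ⟨fun a ha => ?_, hcard⟩
      exact Finset.mem_filter.mpr ⟨Finset.mem_univ _, hall a ha⟩
    · rintro ⟨hsub, hcard⟩
      exact ⟨⟨Finset.subset_univ _, hcard⟩, fun a ha => (Finset.mem_filter.mp (hsub ha)).2⟩
  -- identify the right fibers
  have hfib2 : ∀ A ∈ powersetCard s (univ : Finset (Fin n)),
      (((univ : Finset (Fin n)).offDiag).filter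
        (fun uv => ∀ a ∈ A, uv.1 ≠ a ∧ uv.2 ≠ a ∧ χ s(a, uv.1) = χ s(a, uv.2)))
      = (Aᶜ.offDiag).filter (fun z =>
          oddRamseyProfile χ c0 A z.1 = oddRamseyProfile χ c0 A z.2) := by
    intro A _
    ext ⟨u, v⟩
    simp only [Finset.mem_filter, Finset.mem_offDiag, Finset.mem_univ, true_and,
      Finset.mem_compl, oddRamseyProfile_eq_iff]
    constructor
    · rintro ⟨huv, hall⟩
      refine ⟨⟨fun huA => (hall u huA).1 rfl, fun hvA => (hall v hvA).2.1 rfl, huv⟩,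
        fun a ha => (hall a ha).2.2⟩
    · rintro ⟨⟨huA, hvA, huv⟩, hall⟩
      refine ⟨huv, fun a ha => ⟨fun h => huA (h ▸ ha), fun h => hvA (h ▸ ha), hall a ha⟩⟩
  calc ∑ uv ∈ (univ : Finset (Fin n)).offDiag, (oddRamseyAgr χ uv).card.choose s
      = ∑ uv ∈ (univ : Finset (Fin n)).offDiag,
          ((powersetCard s (univ : Finset (Fin n))).filter
            (fun A => ∀ a ∈ A, uv.1 ≠ a ∧ uv.2 ≠ a ∧ χ s(a, uv.1) = χ s(a, uv.2))).card := by
        refine Finset.sum_congr rfl fun uv huv => ?_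
        rw [hfib1 uv huv, Finset.card_powersetCard]
    _ = ∑ A ∈ powersetCard s (univ : Finset (Fin n)),
          ((((univ : Finset (Fin n)).offDiag).filter
            (fun uv => ∀ a ∈ A, uv.1 ≠ a ∧ uv.2 ≠ a ∧ χ s(a, uv.1) = χ s(a, uv.2)))).card := by
        rw [← key, ← key2]
    _ ≤ ∑ A ∈ powersetCard s (univ : Finset (Fin n)), 9 * (t * t) := by
        refine Finset.sum_le_sum fun A hA => ?_
        rw [hfib2 A hA]
        exact hperA A (Finset.mem_powersetCard.mp hA).2
    _ = n.choose s * (9 * (t * t)) := by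
        rw [Finset.sum_const, smul_eq_mul, Finset.card_powersetCard, Finset.card_univ,
          Fintype.card_fin]

open Finset

lemma odd_ramsey_T3 {n r : ℕ} (χ : Sym2 (Fin n) → Fin r) :
    n * ((n - 1) * (n - 1))
      ≤ r * (∑ uv ∈ (univ : Finset (Fin n)).offDiag, (oddRamseyAgr χ uv).card)
        + r * (n * (n - 1)) := by
  classical
  have key := odd_ramsey_card_left' (univ : Finset (Fin n)) (univ : Finset (Fin n)).offDiag
      (fun w uv => uv.1 ≠ w ∧ uv.2 ≠ w ∧ χ s(w, uv.1) = χ s(w, uv.2))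
  have key2 := odd_ramsey_card_right' (univ : Finset (Fin n)) (univ : Finset (Fin n)).offDiag
      (fun w uv => uv.1 ≠ w ∧ uv.2 ≠ w ∧ χ s(w, uv.1) = χ s(w, uv.2))
  -- right fibers are the agreement sets
  have hfib2 : ∀ uv ∈ (univ : Finset (Fin n)).offDiag,
      ((univ : Finset (Fin n)).filter
          (fun w => uv.1 ≠ w ∧ uv.2 ≠ w ∧ χ s(w, uv.1) = χ s(w, uv.2)))
        = oddRamseyAgr χ uv := fun uv _ => rfl
  -- per-vertex lower bound
  have hperw : ∀ w : Fin n, (n - 1) * (n - 1)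
      ≤ r * ((((univ : Finset (Fin n)).offDiag).filter
          (fun uv => uv.1 ≠ w ∧ uv.2 ≠ w ∧ χ s(w, uv.1) = χ s(w, uv.2))).card + (n - 1)) := by
    intro w
    set Dw := (((univ : Finset (Fin n)).offDiag).filter
        (fun uv => uv.1 ≠ w ∧ uv.2 ≠ w ∧ χ s(w, uv.1) = χ s(w, uv.2))) with hDw
    set N : Fin r → Finset (Fin n) := fun c => univ.filter (fun u => u ≠ w ∧ χ s(w, u) = c)
      with hN
    have hdsum : Dw.card = ∑ c ∈ (univ : Finset (Fin r)),
        ((N c).card * (N c).card - (N c).card) := by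
      rw [Finset.card_eq_sum_card_fiberwise (f := fun uv => χ s(w, uv.1))
        (t := (univ : Finset (Fin r))) (fun z _ => Finset.mem_univ _)]
      refine Finset.sum_congr rfl fun c _ => ?_
      have he : Dw.filter (fun uv => χ s(w, uv.1) = c) = (N c).offDiag := by
        ext ⟨u, v⟩
        simp only [hDw, hN, Finset.mem_filter, Finset.mem_offDiag, Finset.mem_univ, true_and]
        constructor
        · rintro ⟨⟨huv, hu, hv, he⟩, hc⟩
          exact ⟨⟨hu, hc⟩, ⟨hv, he ▸ hc⟩, huv⟩
        · rintro ⟨⟨hu, hc⟩, ⟨hv, hc'⟩, huv⟩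
          exact ⟨⟨huv, hu, hv, hc.trans hc'.symm⟩, hc⟩
      rw [he, Finset.offDiag_card]
    have hcolsum : ∑ c ∈ (univ : Finset (Fin r)), (N c).card = n - 1 := by
      have := Finset.card_eq_sum_card_fiberwise (f := fun u => χ s(w, u))
        (s := (univ : Finset (Fin n)).erase w) (t := (univ : Finset (Fin r)))
        (fun z _ => Finset.mem_univ _)
      rw [Finset.card_erase_of_mem (Finset.mem_univ _), Finset.card_univ,
        Fintype.card_fin] at this
      rw [this]
      refine Finset.sum_congr rfl fun c _ => ?_
      congr 1
      ext u
      simp only [hN, Finset.mem_filter, Finset.mem_erase, Finset.mem_univ, true_and, and_true]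
    have cheb : (∑ c ∈ (univ : Finset (Fin r)), (N c).card) ^ 2
        ≤ ((univ : Finset (Fin r)).card : ℕ) * ∑ c ∈ (univ : Finset (Fin r)), (N c).card ^ 2 :=
      sq_sum_le_card_mul_sum_sq
    have hsq : ∑ c ∈ (univ : Finset (Fin r)), (N c).card ^ 2
        = Dw.card + (n - 1) := by
      rw [hdsum, ← hcolsum, ← Finset.sum_add_distrib]
      refine Finset.sum_congr rfl fun c _ => ?_
      have hle : (N c).card ≤ (N c).card * (N c).card := by
        rcases Nat.eq_zero_or_pos (N c).card with h0 | hpos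
        · rw [h0]
        · exact Nat.le_mul_of_pos_left _ hpos
      rw [pow_two]
      omega
    rw [hcolsum, Finset.card_univ, Fintype.card_fin, hsq, pow_two] at cheb
    exact cheb
  -- sum over all w
  have hsumw : n * ((n - 1) * (n - 1))
      ≤ ∑ w ∈ (univ : Finset (Fin n)),
          (r * ((((univ : Finset (Fin n)).offDiag).filter
            (fun uv => uv.1 ≠ w ∧ uv.2 ≠ w ∧ χ s(w, uv.1) = χ s(w, uv.2))).card + (n - 1))) := by
    calc n * ((n - 1) * (n - 1))
        = ∑ _w ∈ (univ : Finset (Fin n)), (n - 1) * (n - 1) := by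
          rw [Finset.sum_const, Finset.card_univ, Fintype.card_fin, smul_eq_mul]
      _ ≤ _ := Finset.sum_le_sum fun w _ => hperw w
  have hexp : ∑ w ∈ (univ : Finset (Fin n)),
      (r * ((((univ : Finset (Fin n)).offDiag).filter
        (fun uv => uv.1 ≠ w ∧ uv.2 ≠ w ∧ χ s(w, uv.1) = χ s(w, uv.2))).card + (n - 1)))
      = r * (∑ uv ∈ (univ : Finset (Fin n)).offDiag, (oddRamseyAgr χ uv).card)
        + r * (n * (n - 1)) := by
    rw [← Finset.mul_sum, Finset.sum_add_distrib, Finset.sum_const, Finset.card_univ,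
      Fintype.card_fin, smul_eq_mul, ← key, key2, Nat.mul_add]
    simp only [oddRamseyAgr]
  rw [hexp] at hsumw
  exact hsumw

open Finset

lemma odd_ramsey_master {n r s t : ℕ} (hs : 3 ≤ s) (ht : 8 ≤ t) (hteven : Even t)
    (hn2 : 2 ≤ n)
    (χ : Sym2 (Fin n) → Fin r)
    (hχ : ∀ A B : Finset (Fin n), Disjoint A B → A.card = s → B.card = t →
        ∃ c : Fin r, Odd (((A ×ˢ B).filter (fun z => χ s(z.1, z.2) = c)).card)) :
    (n - 1) * (n - 1) ≤ (9 * 16 ^ s * (t * t) + 64 * (s * s)) * r ^ s := by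
  classical
  have hr : 0 < r := (χ s(⟨0, by omega⟩, ⟨1, by omega⟩)).pos
  by_cases hcase : n - 1 < 8 * s * r
  · have h1 : n - 1 ≤ 8 * s * r := le_of_lt hcase
    have hrr : r * r ≤ r ^ s := by
      rw [← pow_two]
      exact Nat.pow_le_pow_right hr (by omega)
    calc (n - 1) * (n - 1) ≤ (8 * s * r) * (8 * s * r) := Nat.mul_le_mul h1 h1
      _ = 64 * (s * s) * (r * r) := by ring
      _ ≤ 64 * (s * s) * r ^ s := Nat.mul_le_mul_left _ hrr
      _ ≤ (9 * 16 ^ s * (t * t) + 64 * (s * s)) * r ^ s :=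
          Nat.mul_le_mul_right _ (Nat.le_add_left _ _)
  · push_neg at hcase
    have c0 : Fin r := ⟨0, hr⟩
    have hperA : ∀ A : Finset (Fin n), A.card = s →
        ((Aᶜ.offDiag).filter (fun z =>
          oddRamseyProfile χ c0 A z.1 = oddRamseyProfile χ c0 A z.2)).card ≤ 9 * (t * t) :=
      fun A hA => odd_ramsey_perA ht hteven χ c0 A hA (fun B hd hB => hχ A B hd hA hB)
    have hDC := odd_ramsey_double_count χ c0 hperA
    have hT3 := odd_ramsey_T3 χ
    set a := n - 1 with ha
    have ha1 : 1 ≤ a := by omega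
    have hna : n ≤ 2 * a := by omega
    set T := ∑ uv ∈ (univ : Finset (Fin n)).offDiag, (oddRamseyAgr χ uv).card with hT
    have h2r : 2 * r ≤ a := by nlinarith
    have hstep1 : n * (a * a) ≤ 2 * (r * T) := by
      have h2 : r * (n * a) * 2 ≤ n * a * a := by
        calc r * (n * a) * 2 = (2 * r) * (n * a) := by ring
          _ ≤ a * (n * a) := Nat.mul_le_mul_right _ h2r
          _ = n * a * a := by ring
      nlinarith [hT3]
    set I := ((univ : Finset (Fin n)).offDiag).filter
        (fun uv => a ≤ 4 * r * (oddRamseyAgr χ uv).card) with hI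
    set S1 := ∑ uv ∈ I, (oddRamseyAgr χ uv).card with hS1
    have hoffcard : ((univ : Finset (Fin n)).offDiag).card = n * a := by
      rw [Finset.offDiag_card, Finset.card_univ, Fintype.card_fin]
      rcases n with _ | m
      · simp
      · have h1 : (m + 1) * (m + 1) = (m + 1) * m + (m + 1) := by ring
        rw [h1, Nat.add_sub_cancel]
        simp [ha]
    have hsplit : n * (a * a) ≤ 4 * (r * S1) := by
      have hTsplit : T = S1 + ∑ uv ∈ ((univ : Finset (Fin n)).offDiag).filter
          (fun uv => ¬ (a ≤ 4 * r * (oddRamseyAgr χ uv).card)), (oddRamseyAgr χ uv).card := by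
        rw [hT, hS1, hI]
        exact (Finset.sum_filter_add_sum_filter_not _ _ _).symm
      have hrest : ∑ uv ∈ ((univ : Finset (Fin n)).offDiag).filter
          (fun uv => ¬ (a ≤ 4 * r * (oddRamseyAgr χ uv).card)), (4 * r) * (oddRamseyAgr χ uv).card
          ≤ (n * a) * a := by
        calc ∑ uv ∈ ((univ : Finset (Fin n)).offDiag).filter
              (fun uv => ¬ (a ≤ 4 * r * (oddRamseyAgr χ uv).card)),
                (4 * r) * (oddRamseyAgr χ uv).card
            ≤ ∑ _uv ∈ ((univ : Finset (Fin n)).offDiag).filter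
              (fun uv => ¬ (a ≤ 4 * r * (oddRamseyAgr χ uv).card)), a := by
              refine Finset.sum_le_sum fun uv huv => ?_
              have hx := (Finset.mem_filter.mp huv).2
              omega
          _ = (((univ : Finset (Fin n)).offDiag).filter
              (fun uv => ¬ (a ≤ 4 * r * (oddRamseyAgr χ uv).card))).card * a := by
              rw [Finset.sum_const, smul_eq_mul]
          _ ≤ (n * a) * a := by
              refine Nat.mul_le_mul_right _ ?_
              rw [← hoffcard]
              exact Finset.card_filter_le _ _
      have hmul : 4 * r * T = 4 * r * S1 + ∑ uv ∈ ((univ : Finset (Fin n)).offDiag).filter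
          (fun uv => ¬ (a ≤ 4 * r * (oddRamseyAgr χ uv).card)),
            (4 * r) * (oddRamseyAgr χ uv).card := by
        rw [hTsplit, Nat.mul_add]
        congr 1
        exact Finset.mul_sum _ _ _
      nlinarith [hstep1]
    have hptwise : ∀ uv ∈ I, (oddRamseyAgr χ uv).card ^ s
        ≤ 2 ^ s * (Nat.factorial s * Nat.choose (oddRamseyAgr χ uv).card s) := by
      intro uv huv
      set g := (oddRamseyAgr χ uv).card with hg
      have hIg : a ≤ 4 * r * g := (Finset.mem_filter.mp huv).2
      have hg2s : 2 * s ≤ g := by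
        have h8 : 4 * r * (2 * s) ≤ 4 * r * g := by
          calc 4 * r * (2 * s) = 8 * s * r := by ring
            _ ≤ a := hcase
            _ ≤ 4 * r * g := hIg
        exact Nat.le_of_mul_le_mul_left h8 (by omega)
      have h2g : g ≤ 2 * (g - s) := by omega
      calc g ^ s ≤ (2 * (g - s)) ^ s := Nat.pow_le_pow_left h2g s
        _ = 2 ^ s * (g - s) ^ s := by rw [mul_pow]
        _ ≤ 2 ^ s * (g + 1 - s) ^ s :=
            Nat.mul_le_mul_left _ (Nat.pow_le_pow_left (by omega) s)
        _ ≤ 2 ^ s * Nat.descFactorial g s :=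
            Nat.mul_le_mul_left _ (Nat.pow_sub_le_descFactorial g s)
        _ = 2 ^ s * (Nat.factorial s * Nat.choose g s) := by
            rw [Nat.descFactorial_eq_factorial_mul_choose]
    have hsum_pow : ∑ uv ∈ I, (oddRamseyAgr χ uv).card ^ s
        ≤ 2 ^ s * (9 * (t * t)) * n ^ s := by
      calc ∑ uv ∈ I, (oddRamseyAgr χ uv).card ^ s
          ≤ ∑ uv ∈ I, 2 ^ s * (Nat.factorial s * Nat.choose (oddRamseyAgr χ uv).card s) :=
            Finset.sum_le_sum hptwise
        _ = 2 ^ s * Nat.factorial s * ∑ uv ∈ I, Nat.choose (oddRamseyAgr χ uv).card s := by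
            rw [Finset.mul_sum]
            refine Finset.sum_congr rfl fun uv _ => ?_
            ring
        _ ≤ 2 ^ s * Nat.factorial s * ∑ uv ∈ (univ : Finset (Fin n)).offDiag,
              Nat.choose (oddRamseyAgr χ uv).card s :=
            Nat.mul_le_mul_left _ (Finset.sum_le_sum_of_subset (Finset.filter_subset _ _))
        _ ≤ 2 ^ s * Nat.factorial s * (n.choose s * (9 * (t * t))) :=
            Nat.mul_le_mul_left _ hDC
        _ = 2 ^ s * (9 * (t * t)) * (Nat.factorial s * n.choose s) := by ring
        _ ≤ 2 ^ s * (9 * (t * t)) * n ^ s := by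
            refine Nat.mul_le_mul_left _ ?_
            rw [← Nat.descFactorial_eq_factorial_mul_choose]
            exact Nat.descFactorial_le_pow n s
    have hholder : S1 ^ s ≤ (n * a) ^ (s - 1) * ∑ uv ∈ I, (oddRamseyAgr χ uv).card ^ s := by
      have hh := pow_sum_le_card_mul_sum_pow (s := I)
        (f := fun uv => ((oddRamseyAgr χ uv).card : ℕ)) (fun _ _ => Nat.zero_le _) (s - 1)
      have hse : s - 1 + 1 = s := by omega
      rw [hse] at hh
      calc S1 ^ s ≤ (I.card : ℕ) ^ (s - 1) * ∑ uv ∈ I, (oddRamseyAgr χ uv).card ^ s := hh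
        _ ≤ (n * a) ^ (s - 1) * ∑ uv ∈ I, (oddRamseyAgr χ uv).card ^ s := by
            refine Nat.mul_le_mul_right _ (Nat.pow_le_pow_left ?_ _)
            rw [← hoffcard]
            exact Finset.card_filter_le _ _
    have hchain : (n * (a * a)) ^ s
        ≤ 4 ^ s * r ^ s * ((n * a) ^ (s - 1) * (2 ^ s * (9 * (t * t)) * n ^ s)) := by
      calc (n * (a * a)) ^ s ≤ (4 * (r * S1)) ^ s := Nat.pow_le_pow_left hsplit s
        _ = 4 ^ s * r ^ s * S1 ^ s := by rw [mul_pow, mul_pow]; ring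
        _ ≤ 4 ^ s * r ^ s * ((n * a) ^ (s - 1) * ∑ uv ∈ I, (oddRamseyAgr χ uv).card ^ s) :=
            Nat.mul_le_mul_left _ hholder
        _ ≤ 4 ^ s * r ^ s * ((n * a) ^ (s - 1) * (2 ^ s * (9 * (t * t)) * n ^ s)) :=
            Nat.mul_le_mul_left _ (Nat.mul_le_mul_left _ hsum_pow)
    have hcancel1 : (a * a) ^ s
        ≤ 4 ^ s * r ^ s * ((n * a) ^ (s - 1) * (2 ^ s * (9 * (t * t)))) := by
      have hl : (n * (a * a)) ^ s = n ^ s * (a * a) ^ s := by rw [mul_pow]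
      have hrr : 4 ^ s * r ^ s * ((n * a) ^ (s - 1) * (2 ^ s * (9 * (t * t)) * n ^ s))
          = n ^ s * (4 ^ s * r ^ s * ((n * a) ^ (s - 1) * (2 ^ s * (9 * (t * t))))) := by ring
      rw [hl, hrr] at hchain
      exact Nat.le_of_mul_le_mul_left hchain (Nat.pow_pos (by omega))
    have hcancel2 : (a * a) ^ (s - 1) * (a * a)
        ≤ (a * a) ^ (s - 1) * (9 * 16 ^ s * (t * t) * r ^ s) := by
      calc (a * a) ^ (s - 1) * (a * a) = (a * a) ^ s := by
            rw [← pow_succ]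
            congr 1
            omega
        _ ≤ 4 ^ s * r ^ s * ((n * a) ^ (s - 1) * (2 ^ s * (9 * (t * t)))) := hcancel1
        _ ≤ 4 ^ s * r ^ s * ((2 ^ s * (a * a) ^ (s - 1)) * (2 ^ s * (9 * (t * t)))) := by
            refine Nat.mul_le_mul_left _ (Nat.mul_le_mul_right _ ?_)
            calc (n * a) ^ (s - 1) ≤ ((2 * a) * a) ^ (s - 1) :=
                  Nat.pow_le_pow_left (Nat.mul_le_mul_right _ hna) _
              _ = 2 ^ (s - 1) * (a * a) ^ (s - 1) := by rw [mul_assoc, mul_pow]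
              _ ≤ 2 ^ s * (a * a) ^ (s - 1) :=
                  Nat.mul_le_mul_right _ (Nat.pow_le_pow_right (by omega) (by omega))
        _ = (a * a) ^ (s - 1) * (4 ^ s * 2 ^ s * 2 ^ s * 9 * (t * t) * r ^ s) := by ring
        _ = (a * a) ^ (s - 1) * (9 * 16 ^ s * (t * t) * r ^ s) := by
            have h16 : (16 : ℕ) ^ s = 4 ^ s * 2 ^ s * 2 ^ s := by
              rw [← mul_pow, ← mul_pow]
              norm_num
            rw [h16]
            ring
    have hfin : a * a ≤ 9 * 16 ^ s * (t * t) * r ^ s :=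
      Nat.le_of_mul_le_mul_left (by
        calc (a * a) ^ (s - 1) * (a * a) ≤ (a * a) ^ (s - 1) * (9 * 16 ^ s * (t * t) * r ^ s) :=
          hcancel2) (Nat.pow_pos (Nat.mul_pos ha1 ha1))
    calc a * a ≤ 9 * 16 ^ s * (t * t) * r ^ s := hfin
      _ ≤ (9 * 16 ^ s * (t * t) + 64 * (s * s)) * r ^ s :=
          Nat.mul_le_mul_right _ (Nat.le_add_right _ _)

/-- **Theorem (odd-Ramsey number of complete bipartite graphs).**
Let `3 ≤ s ≤ t` with `s` odd and `t` even, `t ≥ 8`. Then for all sufficiently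
large `n`, any `r`-coloring of the edges of `K_n` under which every copy of
`K_{s,t}` is odd-chromatic (some color occurs an odd number of times) must
satisfy `r > n ^ (1 / (s/2 + 1/(2⌊t/8⌋)))`. -/
theorem odd_ramsey_complete_bipartite (s t : ℕ) (hs : 3 ≤ s) (hst : s ≤ t)
    (hsodd : Odd s) (hteven : Even t) (ht8 : 8 ≤ t) :
    ∃ n₀ : ℕ, ∀ n ≥ n₀, ∀ r : ℕ,
      (∃ χ : Sym2 (Fin n) → Fin r,
        ∀ A B : Finset (Fin n), Disjoint A B → A.card = s → B.card = t →
          ∃ c : Fin r,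
            Odd (((A ×ˢ B).filter (fun p => χ s(p.1, p.2) = c)).card)) →
      (r : ℝ) > (n : ℝ) ^ (1 / ((s : ℝ) / 2 + 1 / (2 * ((t / 8 : ℕ) : ℝ)))) := by
  have hk1 : 1 ≤ t / 8 := by omega
  have hkR : (0 : ℝ) < ((t / 8 : ℕ) : ℝ) := by
    exact_mod_cast Nat.lt_of_lt_of_le Nat.zero_lt_one hk1
  set β : ℝ := (s : ℝ) / 2 + 1 / (2 * ((t / 8 : ℕ) : ℝ)) with hβ
  have hβpos : 0 < β := by
    have hs0 : (0:ℝ) < (s:ℝ) := by exact_mod_cast Nat.lt_of_lt_of_le Nat.zero_lt_one (by omega)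
    positivity
  set α : ℝ := 1 / β with hα
  have hαpos : 0 < α := by positivity
  have hαs2 : α * (s : ℝ) < 2 := by
    rw [hα]
    rw [div_mul_eq_mul_div, one_mul, div_lt_iff₀ hβpos]
    have hexp : 2 * β = (s : ℝ) + 1 / ((t / 8 : ℕ) : ℝ) := by
      rw [hβ]
      field_simp
    rw [hexp]
    have : (0:ℝ) < 1 / ((t / 8 : ℕ) : ℝ) := by positivity
    linarith
  set K : ℕ := 9 * 16 ^ s * (t * t) + 64 * (s * s) with hKdef
  have hKpos : 0 < K := by positivity
  set δ : ℝ := 2 - α * s with hδdef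
  have hδpos : 0 < δ := by rw [hδdef]; linarith
  refine ⟨max 2 (⌈((4 * K + 1 : ℝ)) ^ (1 / δ)⌉₊ + 1), fun n hn r ⟨χ, hχ⟩ => ?_⟩
  have hn2 : 2 ≤ n := le_trans (le_max_left _ _) hn
  have hmaster := odd_ramsey_master hs ht8 hteven hn2 χ hχ
  -- cast to ℝ
  have hcast : ((n : ℝ) - 1) * ((n : ℝ) - 1) ≤ (K : ℝ) * (r : ℝ) ^ s := by
    have h1 : (1:ℕ) ≤ n := by omega
    have := hmaster
    have hc : (((n - 1) * (n - 1) : ℕ) : ℝ) ≤ (((K * r ^ s : ℕ)) : ℝ) := by exact_mod_cast this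
    push_cast [Nat.cast_sub h1] at hc
    convert hc using 2 <;> push_cast <;> ring
  -- n is large : (4K+1) ≤ n^δ
  have hnδ : (4 * (K : ℝ) + 1) ≤ (n : ℝ) ^ δ := by
    have hge : ((4 * K + 1 : ℝ)) ^ (1 / δ) ≤ (n : ℝ) := by
      have h1 : (⌈((4 * K + 1 : ℝ)) ^ (1 / δ)⌉₊ + 1 : ℕ) ≤ n :=
        le_trans (le_max_right _ _) hn
      have h2 : ((4 * K + 1 : ℝ)) ^ (1 / δ) ≤ (⌈((4 * K + 1 : ℝ)) ^ (1 / δ)⌉₊ : ℝ) :=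
        Nat.le_ceil _
      have h3 : ((⌈((4 * K + 1 : ℝ)) ^ (1 / δ)⌉₊ : ℝ)) ≤ (n : ℝ) := by
        exact_mod_cast le_trans (Nat.le_succ _) h1
      linarith
    have hbase : (0:ℝ) ≤ ((4 * K + 1 : ℝ)) ^ (1 / δ) := Real.rpow_nonneg (by positivity) _
    calc (4 * (K : ℝ) + 1) = (((4 * K + 1 : ℝ)) ^ (1 / δ)) ^ δ := by
          rw [← Real.rpow_mul (by positivity : (0:ℝ) ≤ 4 * (K:ℝ) + 1),
            one_div_mul_cancel (ne_of_gt hδpos), Real.rpow_one]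
      _ ≤ (n : ℝ) ^ δ := Real.rpow_le_rpow hbase hge (le_of_lt hδpos)
  -- n*n ≥ n^(αs) * (4K+1)
  have hnpos : (0:ℝ) < (n : ℝ) := by exact_mod_cast Nat.lt_of_lt_of_le Nat.zero_lt_two hn2
  have hsq : (n : ℝ) ^ (α * s) * (4 * (K : ℝ) + 1) ≤ (n : ℝ) * (n : ℝ) := by
    have h1 : (n : ℝ) ^ (α * s) * (n : ℝ) ^ δ = (n : ℝ) * (n : ℝ) := by
      rw [← Real.rpow_add hnpos]
      have : α * s + δ = 2 := by rw [hδdef]; ring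
      rw [this]
      rw [show (2:ℝ) = ((2:ℕ):ℝ) by norm_num, Real.rpow_natCast]
      ring
    calc (n : ℝ) ^ (α * s) * (4 * (K : ℝ) + 1) ≤ (n : ℝ) ^ (α * s) * (n : ℝ) ^ δ := by
          refine mul_le_mul_of_nonneg_left hnδ (Real.rpow_nonneg (le_of_lt hnpos) _)
      _ = (n : ℝ) * (n : ℝ) := h1
  -- conclude r^s > n^(αs)
  have hrs : (n : ℝ) ^ (α * s) < (r : ℝ) ^ s := by
    have hhalf : (n : ℝ) / 2 ≤ (n : ℝ) - 1 := by
      have : (2:ℝ) ≤ (n:ℝ) := by exact_mod_cast hn2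
      linarith
    have hquarter : (n : ℝ) * (n : ℝ) / 4 ≤ ((n : ℝ) - 1) * ((n : ℝ) - 1) := by
      have h0 : (0:ℝ) ≤ (n:ℝ)/2 := by positivity
      calc (n : ℝ) * (n : ℝ) / 4 = ((n:ℝ)/2) * ((n:ℝ)/2) := by ring
        _ ≤ ((n : ℝ) - 1) * ((n : ℝ) - 1) := mul_le_mul hhalf hhalf h0 (by linarith)
    have hnas : (0:ℝ) < (n : ℝ) ^ (α * s) := Real.rpow_pos_of_pos hnpos _
    have hKR : (0:ℝ) < (K : ℝ) := by exact_mod_cast hKpos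
    have hmain : (K:ℝ) * (n : ℝ) ^ (α * s) < (K : ℝ) * (r : ℝ) ^ s := by
      calc (K:ℝ) * (n : ℝ) ^ (α * s) < (n : ℝ) ^ (α * s) * (4 * (K : ℝ) + 1) / 4 := by
            have : (K:ℝ) < (4 * (K:ℝ) + 1)/4 := by linarith
            calc (K:ℝ) * (n : ℝ) ^ (α * s) = (n : ℝ) ^ (α * s) * (K:ℝ) := by ring
              _ < (n : ℝ) ^ (α * s) * ((4 * (K:ℝ) + 1)/4) := by
                  exact mul_lt_mul_of_pos_left this hnas
              _ = (n : ℝ) ^ (α * s) * (4 * (K : ℝ) + 1) / 4 := by ring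
        _ ≤ (n : ℝ) * (n : ℝ) / 4 := by linarith
        _ ≤ ((n : ℝ) - 1) * ((n : ℝ) - 1) := hquarter
        _ ≤ (K : ℝ) * (r : ℝ) ^ s := hcast
    exact lt_of_mul_lt_mul_left hmain (le_of_lt hKR)
  -- conclude
  by_contra hcon
  push_neg at hcon
  have hr0 : (0:ℝ) ≤ (r:ℝ) := by positivity
  have : (r : ℝ) ^ s ≤ ((n : ℝ) ^ α) ^ s := pow_le_pow_left₀ hr0 hcon s
  have heq : ((n : ℝ) ^ α) ^ s = (n : ℝ) ^ (α * s) := by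
    rw [← Real.rpow_natCast ((n : ℝ) ^ α) s, ← Real.rpow_mul (le_of_lt hnpos)]
  rw [heq] at this
  linarith
end

section
/- Let n ≥ 4 be an even integer. Then the unique-Ramsey number of Hamilton cycles satisfies r_u(n, C_n) ≤ n/2 + 1; that is, there exists an edge-coloring of the complete graph K_n with n/2 + 1 colors under which every Hamilton cycle of K_n contains some color occurring exactly once. -/
/-!
Split `Fin n`, `n = 2k`, into the `k` hubs `h < k`, the vertex `f = k` and the `k - 1` spokes
`a > k`; colour each hub–spoke edge `s(h, a)` with `h` and every other edge with `k`. In a Hamilton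
cycle, colour `h` occurs once for each spoke neighbour of `h`, so at most twice. If no colour
occurs exactly once, every hub has 0 or 2 spoke neighbours. Not all hubs can have 2, since the
spokes carry at most `2(k - 1)` cycle edges; so the set `Z` of hubs without spoke neighbours is
nonempty. A hub with two spoke neighbours has no room for a neighbour in `Z`, so the cycle leaves
`Z` only through `f`. But the cycle crosses both cuts `Z` and `Z ∪ {f}` at least twice, which
gives `f` four cycle edges.
-/

open Finset

namespace SimpleGraph

variable {V : Type*} [Fintype V] {G : SimpleGraph V} [DecidableRel G.Adj]

theorem exists_card_filter_adj_lt_of_card_lt {A H : Finset V} {d : ℕ} (hd : 0 < d)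
    (hdeg : ∀ a ∈ A, G.degree a ≤ d) (hAH : #A < #H) : ∃ h ∈ H, #{a ∈ A | G.Adj h a} < d := by
  by_contra! hH
  have hbelow : ∀ a ∈ A, #(H.bipartiteBelow G.Adj a) ≤ d := fun a ha =>
    (card_le_card fun h hh => by simpa [bipartiteBelow, adj_comm] using (mem_filter.mp hh).2).trans
      (card_neighborFinset_eq_degree G a ▸ hdeg a ha)
  have key : #H * d ≤ #A * d :=
    calc #H * d ≤ ∑ h ∈ H, #(A.bipartiteAbove G.Adj h) := by
          simpa [bipartiteAbove] using card_nsmul_le_sum H _ d hH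
      _ = ∑ a ∈ A, #(H.bipartiteBelow G.Adj a) :=
          sum_card_bipartiteAbove_eq_sum_card_bipartiteBelow _
      _ ≤ #A * d := by simpa using sum_le_card_nsmul A _ d hbelow
  exact absurd key (not_le.mpr (Nat.mul_lt_mul_of_pos_right hAH hd))

theorem card_filter_adj_lt_degree {A : Finset V} {v x : V} (hvx : G.Adj v x) (hx : x ∉ A) :
    #{a ∈ A | G.Adj v a} < G.degree v := by
  rw [← card_neighborFinset_eq_degree]
  refine card_lt_card ((ssubset_iff_of_subset fun a ha => ?_).mpr ⟨x, ?_, fun h => ?_⟩)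
  · exact (mem_neighborFinset _ _ _).mpr (mem_filter.mp ha).2
  · exact (mem_neighborFinset _ _ _).mpr hvx
  · exact hx (mem_filter.mp h).1

variable [DecidableEq V]

theorem exists_adj_notMem_insert
    (hcut : ∀ S : Finset V, ∀ x ∈ S, ∀ y ∉ S, 2 ≤ #(G.interedges S Sᶜ))
    {f : V} (hf : G.degree f ≤ 2) {Z : Finset V} {z y : V} (hz : z ∈ Z) (hy : y ∉ insert f Z) :
    ∃ x ∈ Z, ∃ v, G.Adj x v ∧ v ∉ insert f Z := by
  by_contra! hZ
  -- Every edge crossing the cut `Z` or the cut `insert f Z` is incident to `f`.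
  rw [mem_insert, not_or] at hy
  have hinto : #(G.interedges Z Zᶜ) ≤ #{v ∈ G.neighborFinset f | v ∈ Z} := by
    have hsnd : ∀ p ∈ G.interedges Z Zᶜ, p.2 = f := fun p hp => by
      obtain ⟨hp1, hp2, hadj⟩ := (mem_interedges_iff _).mp hp
      simpa [mem_compl.mp hp2] using hZ p.1 hp1 p.2 hadj
    refine card_le_card_of_injOn Prod.fst (fun p hp => ?_) (fun p hp q hq hpq => ?_)
    · obtain ⟨hp1, -, hadj⟩ := (mem_interedges_iff _).mp hp
      rw [coe_filter, Set.mem_ofPred_eq, mem_neighborFinset, ← hsnd p hp]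
      exact ⟨hadj.symm, hp1⟩
    · exact Prod.ext hpq ((hsnd p hp).trans (hsnd q hq).symm)
  have hout : #(G.interedges (insert f Z) (insert f Z)ᶜ) ≤ #{v ∈ G.neighborFinset f | v ∉ Z} := by
    have hfst : ∀ p ∈ G.interedges (insert f Z) (insert f Z)ᶜ, p.1 = f := fun p hp => by
      obtain ⟨hp1, hp2, hadj⟩ := (mem_interedges_iff _).mp hp
      rcases mem_insert.mp hp1 with h | h
      · exact h
      · exact absurd (hZ p.1 h p.2 hadj) (mem_compl.mp hp2)
    refine card_le_card_of_injOn Prod.snd (fun p hp => ?_) (fun p hp q hq hpq => ?_)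
    · obtain ⟨-, hp2, hadj⟩ := (mem_interedges_iff _).mp hp
      rw [coe_filter, Set.mem_ofPred_eq, mem_neighborFinset, ← hfst p hp]
      exact ⟨hadj, fun h => mem_compl.mp hp2 (mem_insert_of_mem h)⟩
    · exact Prod.ext ((hfst p hp).trans (hfst q hq).symm) hpq
  have hsplit := card_filter_add_card_filter_not (s := G.neighborFinset f) (p := (· ∈ Z))
  rw [card_neighborFinset_eq_degree] at hsplit
  have := hcut Z z hz y hy.2
  have := hcut (insert f Z) f (mem_insert_self f Z) y (by simp [hy.1, hy.2])
  omega

theorem exists_card_filter_adj_eq_one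
    (hcut : ∀ S : Finset V, ∀ x ∈ S, ∀ y ∉ S, 2 ≤ #(G.interedges S Sᶜ))
    (hdeg : ∀ v, G.degree v ≤ 2) {A H : Finset V} {f : V} (hAH : Disjoint A H) (hfA : f ∉ A)
    (hV : ∀ v, v ∈ A ∨ v ∈ H ∨ v = f) (hA : A.Nonempty) (hcard : #A < #H) :
    ∃ h ∈ H, #{a ∈ A | G.Adj h a} = 1 := by
  by_contra! hne
  obtain ⟨z, hzH, hz⟩ := exists_card_filter_adj_lt_of_card_lt two_pos (fun a _ => hdeg a) hcard
  obtain ⟨a, ha⟩ := hA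
  set Z := {h ∈ H | #{a ∈ A | G.Adj h a} = 0}
  have hzZ : z ∈ Z := mem_filter.mpr ⟨hzH, by have := hne z hzH; omega⟩
  have haZ : a ∉ insert f Z := by
    simp only [Z, mem_insert, mem_filter, Finset.disjoint_left.mp hAH ha, false_and, or_false]
    rintro rfl
    exact hfA ha
  obtain ⟨x, hxZ, v, hxv, hv⟩ := exists_adj_notMem_insert hcut (hdeg f) hzZ haZ
  obtain ⟨hxH, hx0⟩ := mem_filter.mp hxZ
  rw [mem_insert, not_or] at hv
  rcases hV v with hvA | hvH | rfl
  · exact (card_pos.mpr ⟨v, mem_filter.mpr ⟨hvA, hxv⟩⟩).ne' hx0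
  · have hv0 : #{a ∈ A | G.Adj v a} ≠ 0 := fun h => hv.2 (mem_filter.mpr ⟨hvH, h⟩)
    have hv3 := card_filter_adj_lt_degree hxv.symm (Finset.disjoint_right.mp hAH hxH)
    have := hne v hvH
    have := hdeg v
    omega
  · exact hv.1 rfl

end SimpleGraph

namespace SimpleGraph.Walk

variable {V : Type*} {G : SimpleGraph V}

lemma IsCycle.degree_toSubgraph_spanningCoe {u v : V} {w : G.Walk u u} (hw : w.IsCycle)
    [Fintype (w.toSubgraph.spanningCoe.neighborSet v)] (hv : v ∈ w.support) :
    w.toSubgraph.spanningCoe.degree v = 2 := by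
  rw [← card_neighborSet_eq_degree, Fintype.card_eq_nat_card, Nat.card_coe_set_eq]
  exact hw.ncard_neighborSet_toSubgraph_eq_two hv

lemma IsTrail.two_le_card_interedges [Fintype V] [DecidableEq V] {u : V} {w : G.Walk u u}
    (hw : w.IsTrail) [DecidableRel w.toSubgraph.spanningCoe.Adj] {S : Finset V} {x y : V}
    (hx : x ∈ w.support) (hy : y ∈ w.support) (hxS : x ∈ S) (hyS : y ∉ S) :
    2 ≤ #(w.toSubgraph.spanningCoe.interedges S Sᶜ) := by
  set c := w.rotate x hx
  have hyc : y ∈ c.support := (w.mem_support_rotate_iff x hx).mpr hy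
  obtain ⟨d, hd, hdS, hdS'⟩ := (c.takeUntil y hyc).exists_boundary_dart S hxS hyS
  obtain ⟨d', hd', hd'S, hd'S'⟩ :=
    (c.dropUntil y hyc).exists_boundary_dart (↑S)ᶜ (by simpa using hyS) (by simpa using hxS)
  have hd_mem := List.mem_map_of_mem (f := Dart.edge) hd
  have hd'_mem := List.mem_map_of_mem (f := Dart.edge) hd'
  have hadj : ∀ {a b : V}, s(a, b) ∈ c.edges → w.toSubgraph.spanningCoe.Adj a b := fun he =>
    w.mem_edges_toSubgraph.mpr ((w.rotate_edges x hx).mem_iff.mp he)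
  refine Finset.one_lt_card.mpr ⟨d.toProd, ?_, d'.toProd.swap, ?_, fun h => ?_⟩
  · exact (mk_mem_interedges_iff _).mpr ⟨hdS, by simpa using hdS',
      hadj (c.edges_takeUntil_subset_edges hyc hd_mem)⟩
  · exact (mk_mem_interedges_iff _).mpr ⟨by simpa using hd'S', by simpa using hd'S,
      (hadj (c.edges_dropUntil_subset_edges hyc hd'_mem)).symm⟩
  · have hdd' : d.edge = d'.edge := by simp [Dart.edge, h, Sym2.eq_swap]
    exact (hw.rotate hx).disjoint_edges_takeUntil_dropUntil hyc hd_mem (hdd' ▸ hd'_mem)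

lemma IsTrail.length_filter_edges_eq_card [DecidableEq V] {u v : V} {w : G.Walk u v}
    (hw : w.IsTrail) [DecidableRel w.toSubgraph.spanningCoe.Adj] {P : Sym2 V → Prop}
    [DecidablePred P] {h : V} {A : Finset V} (hP : ∀ e, P e ↔ ∃ a ∈ A, e = s(h, a)) :
    (w.edges.filter (P ·)).length = #{a ∈ A | w.toSubgraph.spanningCoe.Adj h a} := by
  rw [← List.toFinset_card_of_nodup (hw.edges_nodup.filter _),
    ← card_image_of_injective {a ∈ A | _} (fun _ _ => Sym2.congr_right.mp)]
  refine congrArg card (Finset.ext fun e => ?_)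
  simp only [List.mem_toFinset, List.mem_filter, decide_eq_true_eq, hP, mem_image, mem_filter,
    Subgraph.spanningCoe_adj]
  constructor
  · rintro ⟨he, a, ha, rfl⟩
    exact ⟨a, ⟨ha, w.mem_edges_toSubgraph.mpr he⟩, rfl⟩
  · rintro ⟨a, ⟨ha, hadj⟩, rfl⟩
    exact ⟨w.mem_edges_toSubgraph.mp hadj, a, ha, rfl⟩

end SimpleGraph.Walk

lemma Fin.card_filter_lt_val (n m : ℕ) : #{i : Fin n | m < (i : ℕ)} = n - (m + 1) := by
  have h := card_filter_add_card_filter_not (s := univ) (p := fun i : Fin n => m < (i : ℕ))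
  simp only [not_lt, ← Nat.lt_succ_iff, Fin.card_filter_val_lt, card_univ, Fintype.card_fin] at h
  omega

def hubSpokeColoring (n k : ℕ) : Sym2 (Fin n) → Fin (k + 1) :=
  Sym2.lift ⟨fun x y =>
    ⟨if (x : ℕ) < k ∧ k < (y : ℕ) then x else if (y : ℕ) < k ∧ k < (x : ℕ) then y else k,
      by split_ifs <;> omega⟩,
    fun x y => by ext; dsimp only; split_ifs <;> omega⟩

lemma hubSpokeColoring_eq_iff {n k : ℕ} {h : Fin n} (hh : (h : ℕ) < k) (e : Sym2 (Fin n)) :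
    hubSpokeColoring n k e = ⟨h, by omega⟩ ↔
      ∃ a ∈ ({a | k < (a : ℕ)} : Finset (Fin n)), e = s(h, a) := by
  refine Sym2.ind (fun x y => ?_) e
  simp only [hubSpokeColoring, Sym2.lift_mk, Fin.ext_iff, mem_filter, mem_univ, true_and,
    Sym2.eq_iff]
  split_ifs with hxy hyx
  · exact ⟨fun hx => ⟨y, hxy.2, Or.inl ⟨hx, rfl⟩⟩, fun ⟨a, ha, hxa⟩ => by omega⟩
  · exact ⟨fun hy => ⟨x, hyx.2, Or.inr ⟨rfl, hy⟩⟩, fun ⟨a, ha, hxa⟩ => by omega⟩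
  · exact ⟨fun hk => by omega, fun ⟨a, ha, hxa⟩ => by omega⟩

/-- **Proposition.** For even `n ≥ 4`, `r_u(n, C_n) ≤ n/2 + 1`: there is an
edge-coloring of `K_n` with `n/2 + 1` colors under which every Hamilton cycle
has some color occurring exactly once. -/
theorem unique_ramsey_hamilton_cycle_upper (n : ℕ) (hn : 4 ≤ n) (hne : Even n) :
    ∃ χ : Sym2 (Fin n) → Fin (n / 2 + 1),
      ∀ (a : Fin n) (w : (⊤ : SimpleGraph (Fin n)).Walk a a), w.IsHamiltonianCycle →
        ∃ c, (w.edges.filter (fun e => χ e = c)).length = 1 := by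
  classical
  have hn2 : n = 2 * (n / 2) := (Nat.two_mul_div_two_of_even hne).symm
  refine ⟨hubSpokeColoring n (n / 2), fun u w hw => ?_⟩
  have htrail := hw.isCycle.isTrail
  obtain ⟨h, hh, h1⟩ := SimpleGraph.exists_card_filter_adj_eq_one
    (A := {a | n / 2 < (a : ℕ)}) (H := {h | (h : ℕ) < n / 2}) (f := ⟨n / 2, by omega⟩)
    (fun S x hx y hy => htrail.two_le_card_interedges (hw.mem_support x) (hw.mem_support y) hx hy)
    (fun v => (hw.isCycle.degree_toSubgraph_spanningCoe (hw.mem_support v)).le)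
    (disjoint_filter.mpr fun v _ h1 h2 => by omega) (by simp)
    (fun v => by simp [Fin.ext_iff]; omega)
    ⟨⟨n / 2 + 1, by omega⟩, by simp⟩
    (by rw [Fin.card_filter_lt_val, Fin.card_filter_val_lt]; omega)
  have hhk : (h : ℕ) < n / 2 := (mem_filter.mp hh).2
  exact ⟨⟨h, by omega⟩, (htrail.length_filter_edges_eq_card (hubSpokeColoring_eq_iff hhk)).trans h1⟩
end

section
/- Let n ≥ 4 be an even integer and let G be an n-vertex graph with minimum degree δ(G) ≥ n/2 + 2, whose edges are colored with 2 colors. If G contains an odd-chromatic copy of the 4-cycle C_4, then G contains an even-chromatic Hamilton cycle. -/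
/-!
Let `abcd` be the odd-chromatic 4-cycle. Since `δ(G) ≥ n/2 + 2`, the vertices `a` and `c` have a
common neighbour `t ∉ {b, d}`, and the graph induced on the remaining `n - 3` vertices has minimum
degree at least `n/2 - 1`; by Ore's theorem it is Hamiltonian-connected, so it has a Hamiltonian
path `R` from `b` to `d`. The two Hamiltonian cycles `a b R d c t a` and `a t c b R d a` use the
edges of `R`, `at` and `ct` twice each and the four edges of `abcd` once in total, so for a colour
occurring an odd number of times on `abcd` one of the two cycles contains it an even number of
times; as `n` is even, that cycle is even-chromatic.

Hamiltonian-connectedness is proved by adding a vertex joined to the two prescribed ends and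
running the Bondy–Chvátal closure argument, in which a Hamiltonian path whose ends have degree
sum at least `|V|` is closed into a Hamiltonian cycle by Ore's crossing argument.
-/

open Finset

theorem List.Nodup.length_eq_card {α : Type*} [Fintype α] [DecidableEq α] {l : List α}
    (hl : l.Nodup) (hmem : ∀ a, a ∈ l) : l.length = Fintype.card α := by
  rw [← List.toFinset_card_of_nodup hl,
    Finset.eq_univ_of_forall fun a => List.mem_toFinset.2 (hmem a), Finset.card_univ]

theorem Cycle.exists_eq_coe_cons_of_mem {α : Type*} [DecidableEq α] {c : Cycle α} {a : α}
    (h : a ∈ c) : ∃ l : List α, c = (a :: l : List α) := by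
  induction c using Quotient.inductionOn' with
  | h l =>
    have ha : a ∈ l := Cycle.mem_coe_iff.1 h
    obtain ⟨l', hl'⟩ : ∃ l', l.rotate (l.idxOf a) = a :: l' := by
      have hhead := List.head?_rotate (List.idxOf_lt_length_iff.2 ha)
      rw [List.getElem?_idxOf ha] at hhead
      exact List.head?_eq_some_iff.1 hhead
    exact ⟨l', Cycle.coe_eq_coe.2 ⟨_, hl'⟩⟩

theorem Cycle.chain_coe_of_isChain {α : Type*} {R : α → α → Prop} {l : List α}
    (hl : l.IsChain R) (hclose : ∀ x ∈ l.getLast?, ∀ y ∈ l.head?, R x y) :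
    Cycle.Chain R l := by
  cases l with
  | nil => exact Cycle.Chain.nil R
  | cons a l =>
    rw [Cycle.chain_coe_cons, ← List.cons_append]
    exact List.isChain_append.2 ⟨hl, List.isChain_singleton a, fun x hx y hy => by
      simp only [List.head?_cons, Option.mem_def, Option.some.injEq] at hy
      exact hy ▸ hclose x hx a rfl⟩

theorem List.exists_eq_map_some_of_none_notMem {α : Type*} :
    ∀ {m : List (Option α)}, none ∉ m → ∃ l : List α, m = l.map some
  | [], _ => ⟨[], rfl⟩
  | none :: _, h => absurd List.mem_cons_self h
  | some a :: _, h =>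
    let ⟨l, hl⟩ := exists_eq_map_some_of_none_notMem fun h' => h (List.mem_cons_of_mem _ h')
    ⟨a :: l, hl ▸ rfl⟩

theorem List.even_length_filter_of_even {β : Type*} (χ : β → Fin 2) {L : List β}
    (hL : Even L.length) {i : Fin 2} (hi : Even (L.filter (χ · = i)).length) (j : Fin 2) :
    Even (L.filter (χ · = j)).length := by
  obtain rfl | hij := eq_or_ne j i
  · exact hi
  have hsplit := L.length_eq_length_filter_add (χ · = i)
  rw [List.filter_congr (p := fun e => !decide (χ e = i)) (q := fun e => decide (χ e = j))
    fun e _ => by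
      rw [Bool.eq_iff_iff]
      simp only [Bool.not_eq_true', decide_eq_false_iff_not, decide_eq_true_eq]
      omega] at hsplit
  rw [hsplit] at hL
  exact (Nat.even_add.1 hL).1 hi

namespace SimpleGraph

variable {V : Type*} {G : SimpleGraph V}

structure IsHamiltonianList (G : SimpleGraph V) (l : List V) : Prop where
  nodup : l.Nodup
  mem : ∀ v, v ∈ l
  isChain : l.IsChain G.Adj

/-- Hamiltonian cycles recorded as cyclic lists of vertices. On two vertices, an edge `[u, v]`
counts as one. -/
def IsHamiltonianCyclicList (G : SimpleGraph V) (c : Cycle V) : Prop :=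
  c.Nodup ∧ (∀ v, v ∈ c) ∧ c.Chain G.Adj

theorem IsHamiltonianList.isHamiltonianCyclicList {l : List V} (hl : G.IsHamiltonianList l)
    (hclose : ∀ x ∈ l.getLast?, ∀ y ∈ l.head?, G.Adj x y) : G.IsHamiltonianCyclicList l :=
  ⟨Cycle.nodup_coe_iff.2 hl.nodup, fun v => Cycle.mem_coe_iff.2 (hl.mem v),
    Cycle.chain_coe_of_isChain hl.isChain hclose⟩

theorem IsHamiltonianList.reverse {l : List V} (hl : G.IsHamiltonianList l) :
    G.IsHamiltonianList l.reverse :=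
  ⟨List.nodup_reverse.2 hl.nodup, fun v => List.mem_reverse.2 (hl.mem v),
    List.isChain_reverse.2 (hl.isChain.imp fun _ _ h => h.symm)⟩

theorem isChain_of_isChain_sup_edge {u v : V} {l : List V} (hl : l.IsChain (G ⊔ edge u v).Adj)
    (hu : u ∉ l) : l.IsChain G.Adj :=
  hl.imp_of_mem_imp fun a b ha _ hab => by
    simp only [sup_adj, edge_adj] at hab
    rcases hab with hab | ⟨⟨rfl, -⟩ | ⟨-, rfl⟩, -⟩
    · exact hab
    all_goals exact absurd ‹_› hu

/-- `G` with a new vertex `none` joined to `s`: its Hamiltonian cycles through `none` are the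
Hamiltonian paths of `G` with both ends in `s`. -/
def cone (G : SimpleGraph V) (s : Set V) : SimpleGraph (Option V) where
  Adj
    | some a, some b => G.Adj a b
    | none, some b => b ∈ s
    | some a, none => a ∈ s
    | none, none => False
  symm := ⟨by
    rintro (_ | a) (_ | b) h
    exacts [h, h, h, h.symm]⟩
  loopless := ⟨by rintro (_ | a) h; exacts [h, G.loopless.irrefl a h]⟩

@[simp] theorem cone_adj_some_some {s : Set V} {a b : V} :
    (G.cone s).Adj (some a) (some b) ↔ G.Adj a b := Iff.rfl

@[simp] theorem cone_adj_none_some {s : Set V} {b : V} : (G.cone s).Adj none (some b) ↔ b ∈ s :=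
  Iff.rfl

@[simp] theorem cone_adj_some_none {s : Set V} {a : V} : (G.cone s).Adj (some a) none ↔ a ∈ s :=
  Iff.rfl

theorem cone_mono {G' : SimpleGraph V} (h : G ≤ G') (s : Set V) : G.cone s ≤ G'.cone s := by
  rintro (_ | a) (_ | b) hab
  exacts [hab, hab, hab, h hab]

theorem degree_le_degree_cone [Fintype V] [DecidableRel G.Adj] (s : Set V)
    [DecidableRel (G.cone s).Adj] (a : V) : G.degree a ≤ (G.cone s).degree (some a) := by
  rw [← card_neighborFinset_eq_degree, ← card_neighborFinset_eq_degree,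
    ← card_map Function.Embedding.some]
  exact card_le_card fun b hb => by
    obtain ⟨b, hb, rfl⟩ := mem_map.1 hb
    simpa using hb

section DecidableEq

variable [DecidableEq V]

theorem IsHamiltonianList.exists_walk {l : List V} (hl : G.IsHamiltonianList l) {x y : V}
    (hx : l.head? = some x) (hy : l.getLast? = some y) : ∃ p : G.Walk x y, p.IsHamiltonian := by
  have hne : l ≠ [] := by rintro rfl; simp at hx
  refine ⟨(Walk.ofSupport l hne hl.isChain).copy ?_ ?_, fun v => ?_⟩
  · exact Option.some.inj ((List.head?_eq_some_head hne).symm.trans hx)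
  · exact Option.some.inj ((List.getLast?_eq_some_getLast hne).symm.trans hy)
  · rw [Walk.support_copy, Walk.support_ofSupport]
    exact List.count_eq_one_of_mem hl.nodup (hl.mem v)

theorem IsHamiltonianList.exists_walk_of_mem_pair {l : List V}
    (hl : G.IsHamiltonianList l) {x y : V} (hxy : x ≠ y)
    (hhead : ∀ a ∈ l.head?, a ∈ ({x, y} : Set V)) (hlast : ∀ b ∈ l.getLast?, b ∈ ({x, y} : Set V)) :
    ∃ p : G.Walk x y, p.IsHamiltonian := by
  obtain ⟨a, l', rfl⟩ := List.exists_cons_of_ne_nil (List.ne_nil_of_mem (hl.mem x))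
  have hl' : l' ≠ [] := by
    rintro rfl
    exact hxy ((List.mem_singleton.1 (hl.mem x)).trans (List.mem_singleton.1 (hl.mem y)).symm)
  have hb : (a :: l').getLast? = some (l'.getLast hl') := by
    simp [List.getLast?_cons, List.getLast?_eq_some_getLast hl']
  have hab : a ≠ l'.getLast hl' := fun h =>
    (List.nodup_cons.1 hl.nodup).1 (h ▸ List.getLast_mem hl')
  have ha := hhead a rfl
  have hb' := hlast _ hb
  simp only [Set.mem_insert_iff, Set.mem_singleton_iff] at ha hb'
  rcases ha with rfl | rfl <;> rcases hb' with h | h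
  · exact absurd h.symm hab
  · exact h ▸ hl.exists_walk rfl hb
  · exact h ▸ hl.reverse.exists_walk (by rw [List.head?_reverse, hb]) (by simp)
  · exact absurd h.symm hab

theorem exists_isHamiltonianList_of_cone {s : Set V}
    {c : Cycle (Option V)} (hc : (G.cone s).IsHamiltonianCyclicList c) :
    ∃ l, G.IsHamiltonianList l ∧ (∀ a ∈ l.head?, a ∈ s) ∧ ∀ b ∈ l.getLast?, b ∈ s := by
  obtain ⟨m, rfl⟩ := Cycle.exists_eq_coe_cons_of_mem (hc.2.1 none)
  obtain ⟨hnd, hmem, hch⟩ := hc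
  rw [Cycle.nodup_coe_iff, List.nodup_cons] at hnd
  obtain ⟨l, rfl⟩ := List.exists_eq_map_some_of_none_notMem hnd.1
  rw [Cycle.chain_coe_cons, List.isChain_cons, List.isChain_append] at hch
  obtain ⟨hhead, hch, -, hlast⟩ := hch
  refine ⟨l, ⟨List.nodup_map_iff (Option.some_injective V) |>.1 hnd.2, fun v => ?_,
    (List.isChain_map some).1 hch⟩, fun a ha => ?_, fun b hb => ?_⟩
  · simpa using Cycle.mem_coe_iff.1 (hmem (some v))
  · simpa using hhead (some a) (by simp [List.head?_append, Option.mem_def.1 ha])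
  · simpa using hlast (some b) (by simp [List.getLast?_map, Option.mem_def.1 hb]) none rfl

theorem Walk.IsPath.isHamiltonianCycle_append {u v : V} {p : G.Walk u v} {q : G.Walk v u}
    (hp : p.IsPath) (hq : q.IsPath) (hpq : p.support.tail.Disjoint q.support.tail)
    (hlen : 1 < p.length ∨ 1 < q.length) (hmem : ∀ w, w ∈ p.support.tail ∨ w ∈ q.support.tail) :
    (p.append q).IsHamiltonianCycle := by
  have hC := hp.isCycle_append hq hpq hlen
  refine Walk.isHamiltonianCycle_iff_isCycle_and_support_count_tail_eq_one.2
    ⟨hC, fun w => List.count_eq_one_of_mem hC.support_nodup ?_⟩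
  rw [Walk.tail_support_append, List.mem_append]
  exact hmem w

theorem exists_isHamiltonianCycle_even_length_filter {a b c d t : V}
    (hac : a ≠ c) (hab : G.Adj a b) (hbc : G.Adj b c) (hcd : G.Adj c d) (hda : G.Adj d a)
    (hat : G.Adj a t) (hct : G.Adj c t) {R : G.Walk b d} (hR : R.IsPath)
    (hRs : ∀ v, v ∈ R.support ↔ v ≠ a ∧ v ≠ c ∧ v ≠ t) (p : Sym2 V → Bool)
    (hodd : Odd ([s(a, b), s(b, c), s(c, d), s(d, a)].filter p).length) :
    ∃ C : G.Walk a a, C.IsHamiltonianCycle ∧ Even (C.edges.filter p).length := by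
  have hb := (hRs b).1 R.start_mem_support
  have hd := (hRs d).1 R.end_mem_support
  have hta := hat.ne.symm
  have htc := hct.ne.symm
  let C₁ : G.Walk a a :=
    (Walk.cons hab R).append (.cons hcd.symm (.cons hct (.cons hat.symm .nil)))
  let C₂ : G.Walk a a :=
    (Walk.cons hat (.cons hct.symm .nil)).append (.cons hbc.symm (R.append (.cons hda .nil)))
  have hC₁ : C₁.IsHamiltonianCycle :=
    Walk.IsPath.isHamiltonianCycle_append
      ((Walk.cons_isPath_iff _ _).2 ⟨hR, fun h => ((hRs a).1 h).1 rfl⟩)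
      (by simp [Walk.isPath_def, hac.symm, hta, hct.ne, hd.1, hd.2.1, hd.2.2])
      (by simp [List.disjoint_cons_right, hRs]) (by simp) fun v => by simp [hRs]; tauto
  have hC₂ : C₂.IsHamiltonianCycle := by
    refine Walk.IsPath.isHamiltonianCycle_append (by simp [Walk.isPath_def, hat.ne, hac, htc])
      ((Walk.cons_isPath_iff _ _).2 ⟨?_, by simp [Walk.support_append, hRs, hac.symm]⟩)
      (by simp [hRs, List.disjoint_cons_left, hta, htc, hd.2.1.symm, hd.2.2.symm, hac.symm])
      (by simp) fun v => by simp [Walk.support_append, hRs]; tauto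
    simp [Walk.isPath_def, Walk.support_append, List.nodup_append, hR.support_nodup, hRs]
    tauto
  have hsum : (C₁.edges.filter p).length + (C₂.edges.filter p).length =
      2 * (R.edges.filter p).length + 2 * ([s(a, t), s(c, t)].filter p).length +
        ([s(a, b), s(b, c), s(c, d), s(d, a)].filter p).length := by
    simp only [C₁, C₂, Walk.edges_append, Walk.edges_cons, Walk.edges_nil, List.filter_append,
      List.length_append, List.filter_cons, List.filter_nil]
    rw [Sym2.eq_swap (a := d) (b := c), Sym2.eq_swap (a := t) (b := a),
      Sym2.eq_swap (a := t) (b := c), Sym2.eq_swap (a := c) (b := b)]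
    split_ifs <;> simp <;> omega
  rcases Nat.even_or_odd (C₁.edges.filter p).length with h | h
  · exact ⟨C₁, hC₁, h⟩
  · refine ⟨C₂, hC₂, ?_⟩
    rw [Nat.odd_iff] at h hodd
    rw [Nat.even_iff]
    omega

variable [Fintype V] [DecidableRel G.Adj]

/-- Pigeonhole: the positions of the neighbours of `p` and the positions just after those of the
neighbours of `q` all lie in `1, …, |V| - 1`. -/
theorem IsHamiltonianList.exists_adj_adj_idxOf_eq_succ {l : List V} (hl : G.IsHamiltonianList l)
    {p q : V} (hp : l.head? = some p) (hq : l.getLast? = some q)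
    (hdeg : Fintype.card V ≤ G.degree p + G.degree q) :
    ∃ x y, G.Adj p x ∧ G.Adj q y ∧ l.idxOf x = l.idxOf y + 1 := by
  have hidx : ∀ v, l.idxOf v < l.length := fun v => List.idxOf_lt_length_iff.2 (hl.mem v)
  have hinj : ∀ s : Finset V, Set.InjOn l.idxOf s := fun _ x _ _ _ hxy =>
    (List.idxOf_inj (hl.mem x)).1 hxy
  have hp_sub : (G.neighborFinset p).image l.idxOf ⊆ (range l.length).erase 0 := by
    simp only [subset_iff, mem_image, mem_neighborFinset, mem_erase, mem_range]
    rintro _ ⟨x, hx, rfl⟩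
    refine ⟨fun h0 => G.ne_of_adj hx ?_, hidx x⟩
    rw [List.head?_eq_getElem?, ← h0, List.getElem?_idxOf (hl.mem x)] at hp
    exact (Option.some.inj hp).symm
  have hq_sub : (G.neighborFinset q).image (l.idxOf · + 1) ⊆ (range l.length).erase 0 := by
    simp only [subset_iff, mem_image, mem_neighborFinset, mem_erase, mem_range]
    rintro _ ⟨y, hy, rfl⟩
    refine ⟨Nat.succ_ne_zero _, ?_⟩
    have : l.idxOf y ≠ l.length - 1 := fun hlast => G.ne_of_adj hy <| by
      rw [List.getLast?_eq_getElem?, ← hlast, List.getElem?_idxOf (hl.mem y)] at hq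
      exact (Option.some.inj hq).symm
    have := hidx y
    omega
  have hcard : #((range l.length).erase 0) <
      #((G.neighborFinset p).image l.idxOf) + #((G.neighborFinset q).image (l.idxOf · + 1)) := by
    rw [card_image_of_injOn (hinj _), card_image_of_injOn (fun x hx y hy h => hinj _ hx hy
      (Nat.succ_injective h)), card_erase_of_mem (by simpa using (hidx p).pos), card_range,
      hl.nodup.length_eq_card hl.mem, card_neighborFinset_eq_degree, card_neighborFinset_eq_degree]
    have := Fintype.card_pos_iff.2 ⟨p⟩
    omega
  obtain ⟨i, hi⟩ := inter_nonempty_of_card_lt_card_add_card hp_sub hq_sub hcard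
  simp only [mem_inter, mem_image, mem_neighborFinset] at hi
  obtain ⟨⟨x, hx, rfl⟩, y, hy, hxy⟩ := hi
  exact ⟨x, y, hx, hy, hxy.symm⟩

/-- Ore's crossing argument: reverse the part of the path after a crossing pair of edges
`p x`, `q y`. -/
theorem IsHamiltonianList.exists_isHamiltonianCyclicList {l : List V}
    (hl : G.IsHamiltonianList l)
    {p q : V} (hp : l.head? = some p) (hq : l.getLast? = some q)
    (hdeg : Fintype.card V ≤ G.degree p + G.degree q) : ∃ c, G.IsHamiltonianCyclicList c := by
  obtain ⟨x, y, hpx, hqy, hxy⟩ := hl.exists_adj_adj_idxOf_eq_succ hp hq hdeg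
  have hy : l[l.idxOf y]? = some y := List.getElem?_idxOf (hl.mem y)
  have hx : l[l.idxOf y + 1]? = some x := hxy ▸ List.getElem?_idxOf (hl.mem x)
  have hlen : l.idxOf y + 1 < l.length := (List.getElem?_eq_some_iff.1 hx).1
  set i := l.idxOf y
  have hperm : (l.take (i + 1) ++ (l.drop (i + 1)).reverse).Perm l := by
    conv_rhs => rw [← List.take_append_drop (i + 1) l]
    exact (List.perm_append_left_iff _).2 (List.reverse_perm _)
  refine ⟨_, IsHamiltonianList.isHamiltonianCyclicList
    (l := l.take (i + 1) ++ (l.drop (i + 1)).reverse)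
    ⟨hperm.nodup_iff.2 hl.nodup, fun v => hperm.mem_iff.2 (hl.mem v), ?_⟩ ?_⟩
  · refine List.isChain_append.2 ⟨hl.isChain.take _,
      List.isChain_reverse.2 ((hl.isChain.drop _).imp fun _ _ h => h.symm), ?_⟩
    simp [List.getLast?_take, hy, List.getLast?_drop, hlen.not_ge, hq, hqy.symm]
  · simp [List.getLast?_reverse, List.head?_take, hx, hp, hpx.symm]

/-- Read from `u` away from `v`, a Hamiltonian cycle of `G ⊔ edge u v` either avoids `uv` or is
a Hamiltonian path of `G` from `u` to `v` closed by `uv`. -/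
theorem exists_isHamiltonianCyclicList_of_sup_edge_cons {u v : V} {m : List V}
    (hdeg : Fintype.card V ≤ G.degree u + G.degree v)
    (hc : (G ⊔ edge u v).IsHamiltonianCyclicList (u :: m : List V)) (hm : m.head? ≠ some v) :
    ∃ c, G.IsHamiltonianCyclicList c := by
  obtain ⟨hnd, hmem, hch⟩ := hc
  rw [Cycle.nodup_coe_iff] at hnd
  rw [Cycle.chain_coe_cons, ← List.cons_append, List.isChain_append] at hch
  obtain ⟨hch, -, hclose⟩ := hch
  obtain ⟨hhead, htail⟩ := List.isChain_cons.1 hch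
  have hl : G.IsHamiltonianList (u :: m) := by
    refine ⟨hnd, fun w => Cycle.mem_coe_iff.1 (hmem w), List.isChain_cons.2 ⟨fun y hy => ?_,
      isChain_of_isChain_sup_edge htail (List.nodup_cons.1 hnd).1⟩⟩
    have := hhead y hy
    simp only [sup_adj, edge_adj] at this
    rcases this with h | ⟨⟨-, rfl⟩ | ⟨-, rfl⟩, hne⟩
    · exact h
    · exact absurd hy hm
    · exact absurd rfl hne
  by_cases hw : ∀ w ∈ (u :: m).getLast?, G.Adj w u
  · exact ⟨_, hl.isHamiltonianCyclicList fun w hw' y hy => by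
      simp only [List.head?_cons, Option.mem_def, Option.some.injEq] at hy
      exact hy ▸ hw w hw'⟩
  · push Not at hw
    obtain ⟨w, hw, hwu⟩ := hw
    have := hclose w hw u rfl
    simp only [sup_adj, edge_adj, hwu, false_or] at this
    obtain ⟨⟨rfl, -⟩ | ⟨rfl, -⟩, hne⟩ := this
    · exact absurd rfl hne
    · exact hl.exists_isHamiltonianCyclicList rfl hw hdeg

/-- The **Bondy–Chvátal** lemma. -/
theorem exists_isHamiltonianCyclicList_of_sup_edge (hV : 3 ≤ Fintype.card V) {u v : V}
    (hdeg : Fintype.card V ≤ G.degree u + G.degree v)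
    (h : ∃ c, (G ⊔ edge u v).IsHamiltonianCyclicList c) : ∃ c, G.IsHamiltonianCyclicList c := by
  obtain ⟨c, hc⟩ := h
  obtain ⟨m, rfl⟩ := Cycle.exists_eq_coe_cons_of_mem (hc.2.1 u)
  by_cases hm : m.head? = some v
  · obtain ⟨m', rfl⟩ := List.head?_eq_some_iff.1 hm
    have hnd := Cycle.nodup_coe_iff.1 hc.1
    have hlen := hnd.length_eq_card fun w => Cycle.mem_coe_iff.1 (hc.2.1 w)
    have hu : u ∉ m' := fun hu => (List.nodup_cons.1 hnd).1 (List.mem_cons_of_mem _ hu)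
    rw [Cycle.coe_cons_eq_coe_append, List.cons_append, edge_comm] at hc
    refine exists_isHamiltonianCyclicList_of_sup_edge_cons (by omega) hc ?_
    obtain ⟨w, m'', rfl⟩ := List.exists_cons_of_ne_nil (l := m') <| by
      rintro rfl
      simp at hlen
      omega
    intro h
    simp only [List.cons_append, List.head?_cons, Option.some.injEq] at h
    exact hu (h ▸ List.mem_cons_self)
  · exact exists_isHamiltonianCyclicList_of_sup_edge_cons hdeg hc hm

theorem exists_isHamiltonianCyclicList_of_le (hV : 3 ≤ Fintype.card V) {K : SimpleGraph V}
    (hle : G ≤ K)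
    (hdeg : ∀ u v, K.Adj u v → ¬G.Adj u v → Fintype.card V ≤ G.degree u + G.degree v)
    (hK : ∃ c, K.IsHamiltonianCyclicList c) : ∃ c, G.IsHamiltonianCyclicList c := by
  suffices ∀ G : SimpleGraph V, ∀ [DecidableRel G.Adj], G ≤ K →
      (∀ u v, K.Adj u v → ¬G.Adj u v → Fintype.card V ≤ G.degree u + G.degree v) →
      ∃ c, G.IsHamiltonianCyclicList c from this G hle hdeg
  intro G
  induction G using WellFoundedGT.induction with
  | _ G ih =>
  intro _ hle hdeg
  obtain rfl | hHK := eq_or_ne G K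
  · exact hK
  obtain ⟨u, v, huv, hnuv⟩ : ∃ u v, K.Adj u v ∧ ¬G.Adj u v := by
    by_contra! h
    exact hHK (le_antisymm hle fun u v => h u v)
  have hle' : G ≤ G ⊔ edge u v := le_sup_left
  have hlt : G < G ⊔ edge u v := lt_of_le_of_ne hle' fun h =>
    hnuv (h ▸ Or.inr ((edge_adj u v u v).2 ⟨Or.inl ⟨rfl, rfl⟩, huv.ne⟩))
  let : DecidableRel (G ⊔ edge u v).Adj := Classical.decRel _
  refine exists_isHamiltonianCyclicList_of_sup_edge hV (hdeg u v huv hnuv) (ih _ hlt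
    (sup_le hle ((edge_le_iff K).2 (Or.inr huv))) fun a b hab hnab => ?_)
  have := hdeg a b hab fun h => hnab (hle' h)
  have := degree_le_of_le (v := a) hle'
  have := degree_le_of_le (v := b) hle'
  omega

theorem exists_isHamiltonianCyclicList_top_cone {x y : V} (hxy : x ≠ y) :
    ∃ c, ((⊤ : SimpleGraph V).cone {x, y}).IsHamiltonianCyclicList c := by
  set L := x :: (univ.toList.filter fun v => v ≠ x ∧ v ≠ y) ++ [y]
  have hL : L.Nodup := by
    simp [L, List.nodup_append, hxy, (Finset.nodup_toList _).filter]
  refine ⟨_, IsHamiltonianList.isHamiltonianCyclicList (l := none :: L.map some)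
    ⟨?_, fun v => ?_, ?_⟩ ?_⟩
  · simpa using hL.map (Option.some_injective V)
  · rcases v with _ | v
    · simp
    · by_cases hvx : v = x <;> by_cases hvy : v = y <;> simp [L, hvx, hvy]
  · refine List.isChain_cons.2 ⟨by simp [L], (List.isChain_map some).2 ?_⟩
    exact (List.Pairwise.isChain hL).imp fun a b hab => by simpa using hab
  · simp [L, List.getLast?_cons]

/-- **Ore's theorem** for Hamiltonian-connectedness. -/
theorem exists_isHamiltonian_walk_of_ore
    (hdeg : ∀ u v, u ≠ v → ¬G.Adj u v → Fintype.card V + 1 ≤ G.degree u + G.degree v)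
    {x y : V} (hxy : x ≠ y) : ∃ p : G.Walk x y, p.IsHamiltonian := by
  classical
  have hV : 2 ≤ Fintype.card V := Fintype.one_lt_card_iff.2 ⟨x, y, hxy⟩
  have hcone : ∀ u v, ((⊤ : SimpleGraph V).cone {x, y}).Adj u v → ¬(G.cone {x, y}).Adj u v →
      Fintype.card (Option V) ≤ (G.cone {x, y}).degree u + (G.cone {x, y}).degree v := by
    rintro (_ | a) (_ | b) hK hH
    · exact hK.elim
    · exact (hH hK).elim
    · exact (hH hK).elim
    · have := hdeg a b hK hH
      have := degree_le_degree_cone (G := G) {x, y} a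
      have := degree_le_degree_cone (G := G) {x, y} b
      rw [Fintype.card_option]
      omega
  obtain ⟨c, hc⟩ := exists_isHamiltonianCyclicList_of_le (by rw [Fintype.card_option]; omega)
    (cone_mono le_top _) hcone (exists_isHamiltonianCyclicList_top_cone hxy)
  obtain ⟨l, hl, hhead, hlast⟩ := exists_isHamiltonianList_of_cone hc
  exact hl.exists_walk_of_mem_pair hxy hhead hlast

theorem exists_adj_adj_notMem (s : Finset V) {a c : V}
    (h : Fintype.card V + #s < G.degree a + G.degree c) : ∃ t ∉ s, G.Adj a t ∧ G.Adj c t := by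
  by_contra! hs
  have hsub : G.neighborFinset a ∩ G.neighborFinset c ⊆ s := fun t ht => by
    rw [mem_inter, mem_neighborFinset, mem_neighborFinset] at ht
    by_contra hts
    exact hs t hts ht.1 ht.2
  have := card_union_add_card_inter (G.neighborFinset a) (G.neighborFinset c)
  have := card_le_univ (G.neighborFinset a ∪ G.neighborFinset c)
  have := card_le_card hsub
  rw [card_neighborFinset_eq_degree, card_neighborFinset_eq_degree] at *
  omega

theorem degree_le_degree_induce_add (s : Finset V)
    {v : V} (hv : v ∈ s) : G.degree v ≤ (G.induce (s : Set V)).degree ⟨v, hv⟩ + #sᶜ := by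
  rw [← card_neighborFinset_eq_degree, ← card_neighborFinset_eq_degree,
    ← card_map (Function.Embedding.subtype _)]
  refine (card_le_card fun w hw => ?_).trans (card_union_le _ _)
  by_cases hws : w ∈ s
  · exact mem_union_left _ (mem_map.2 ⟨⟨w, hws⟩, by simpa using hw, rfl⟩)
  · exact mem_union_right _ (mem_compl.2 hws)

theorem exists_isPath_mem_support_iff (s : Finset V)
    (hdeg : ∀ v ∈ s, #s + 1 + 2 * #sᶜ ≤ 2 * G.degree v) {b d : V} (hb : b ∈ s) (hd : d ∈ s)
    (hbd : b ≠ d) : ∃ R : G.Walk b d, R.IsPath ∧ ∀ v, v ∈ R.support ↔ v ∈ s := by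
  obtain ⟨p, hp⟩ := exists_isHamiltonian_walk_of_ore (G := G.induce (s : Set V))
    (fun ⟨u, hu⟩ ⟨w, hw⟩ _ _ => by
      have := hdeg u hu
      have := hdeg w hw
      have := degree_le_degree_induce_add (G := G) s hu
      have := degree_le_degree_induce_add (G := G) s hw
      simp only [Fintype.card_coe, Finset.coe_sort_coe]
      omega)
    (x := ⟨b, hb⟩) (y := ⟨d, hd⟩) (by simpa using hbd)
  let f := (Embedding.induce (G := G) (s : Set V)).toHom
  have hsupp : ∀ v, v ∈ (p.map f).support ↔ v ∈ s := fun v => by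
    rw [Walk.support_map, List.mem_map]
    refine ⟨?_, fun hv => ⟨⟨v, hv⟩, hp.mem_support _, rfl⟩⟩
    rintro ⟨⟨w, hw⟩, -, rfl⟩
    exact hw
  exact ⟨p.map f, hp.isPath.map Subtype.val_injective, hsupp⟩

end DecidableEq

end SimpleGraph

open SimpleGraph

theorem even_hamilton_of_odd_C4_general (n : ℕ) (hne : Even n)
    (G : SimpleGraph (Fin n)) [DecidableRel G.Adj]
    (hδ : n / 2 + 2 ≤ G.minDegree)
    (χ : Sym2 (Fin n) → Fin 2)
    (hC4 : ∃ a b c d : Fin n,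
      a ≠ b ∧ a ≠ c ∧ a ≠ d ∧ b ≠ c ∧ b ≠ d ∧ c ≠ d ∧
      G.Adj a b ∧ G.Adj b c ∧ G.Adj c d ∧ G.Adj d a ∧
      ∃ col : Fin 2,
        Odd (([s(a, b), s(b, c), s(c, d), s(d, a)].filter
          (fun e => χ e = col)).length)) :
    ∃ (a : Fin n) (w : G.Walk a a), w.IsHamiltonianCycle ∧
      ∀ c : Fin 2, Even ((w.edges.filter (fun e => χ e = c)).length) := by
  obtain ⟨a, b, c, d, -, hac, -, -, hbd, -, hab, hbc, hcd, hda, col, hodd⟩ := hC4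
  have hdeg v : n / 2 + 2 ≤ G.degree v := hδ.trans (G.minDegree_le_degree v)
  have hn : n / 2 * 2 = n := Nat.div_mul_cancel hne.two_dvd
  obtain ⟨t, ht, hat, hct⟩ := exists_adj_adj_notMem (G := G) {b, d} (a := a) (c := c) (by
    have := hdeg a; have := hdeg c; have := card_le_two (a := b) (b := d)
    rw [Fintype.card_fin]; omega)
  simp only [Finset.mem_insert, Finset.mem_singleton, not_or] at ht
  set s : Finset (Fin n) := {a, c, t}ᶜ
  have hs : #s + 1 + 2 * #sᶜ = n + 4 := by
    have h3 : #({a, c, t} : Finset (Fin n)) = 3 := by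
      rw [card_insert_of_notMem (by simp [hac, hat.ne]), card_pair hct.ne]
    have := card_add_card_compl s
    rw [Fintype.card_fin, compl_compl, h3] at this
    rw [compl_compl, h3]
    omega
  obtain ⟨R, hR, hRs⟩ := exists_isPath_mem_support_iff (G := G) s
    (fun v _ => by have := hdeg v; omega) (b := b) (d := d)
    (by simp [s, hab.ne.symm, hbc.ne, Ne.symm ht.1])
    (by simp [s, hda.ne, hcd.ne.symm, Ne.symm ht.2]) hbd
  obtain ⟨C, hC, heven⟩ := exists_isHamiltonianCycle_even_length_filter hac hab hbc hcd hda hat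
    hct hR (fun v => by simp [hRs, s]) _ hodd
  refine ⟨a, C, hC, List.even_length_filter_of_even χ ?_ heven⟩
  rw [Walk.length_edges, hC.length_eq, Fintype.card_fin]
  exact hne

/-- **Proposition.** Let `n ≥ 4` be even and `G` an `n`-vertex graph with
`δ(G) ≥ n/2 + 2`, whose edges are 2-colored by `χ`. If `G` contains an
odd-chromatic copy of `C₄`, then `G` contains an even-chromatic Hamilton
cycle. -/
theorem even_hamilton_of_odd_C4 (n : ℕ) (hn : 4 ≤ n) (hne : Even n)
    (G : SimpleGraph (Fin n)) [DecidableRel G.Adj]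
    (hδ : n / 2 + 2 ≤ G.minDegree)
    (χ : Sym2 (Fin n) → Fin 2)
    (hC4 : ∃ a b c d : Fin n,
      a ≠ b ∧ a ≠ c ∧ a ≠ d ∧ b ≠ c ∧ b ≠ d ∧ c ≠ d ∧
      G.Adj a b ∧ G.Adj b c ∧ G.Adj c d ∧ G.Adj d a ∧
      ∃ col : Fin 2,
        Odd (([s(a, b), s(b, c), s(c, d), s(d, a)].filter
          (fun e => χ e = col)).length)) :
    ∃ (a : Fin n) (w : G.Walk a a), w.IsHamiltonianCycle ∧
      ∀ c : Fin 2, Even ((w.edges.filter (fun e => χ e = c)).length) :=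
  even_hamilton_of_odd_C4_general n hne G hδ χ hC4
end

section
/- Let n ≥ 3 be an even integer and let G be an n-vertex graph with minimum degree δ(G) ≥ n/2. If more than n/2 vertices of G have degree at least n/2 + 1, then for every pair of vertices u, v ∈ V(G) there is a Hamilton path in G with endpoints u and v. -/
/-!
Add a new vertex adjacent exactly to `u` and `v`: the Hamilton `u`-`v` paths of `G` are the
Hamilton cycles of this graph `G⁺` on `n + 1` vertices. By the Bondy–Chvátal closure lemma, if
`d(a) + d(b) ≥ n + 1` for non-adjacent `a, b`, then `G⁺` is Hamiltonian as soon as `G⁺ + ab` is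
(Ore's crossing argument on a Hamilton `a`-`b` path). So it suffices to reach the complete graph
by adding such edges. Joining every vertex to the set `B` of vertices of degree `≥ n/2 + 1` is
allowed, since every added edge has one endpoint of degree `≥ n/2 + 1` and the other of degree
`≥ n/2`. Afterwards every old vertex is adjacent to all of `B`, so has degree `≥ n/2 + 1`, and
all pairs of old vertices may be joined. Finally the new vertex (degree `2`) may be joined to
every old vertex (degree `≥ n - 1`).
-/

theorem Set.ncard_le_card_filter_of_subset_image {α β : Type*} {s : Set β}
    [DecidablePred (· ∈ s)] (t : Finset α) (f : α → β) (h : s ⊆ f '' t) :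
    s.ncard ≤ (t.filter fun i => f i ∈ s).card := by
  classical
  calc s.ncard ≤ ((t.filter fun i => f i ∈ s).image f : Set β).ncard := by
        refine Set.ncard_le_ncard (fun w hw => ?_) (Finset.finite_toSet _)
        obtain ⟨i, hi, rfl⟩ := h hw
        simpa using ⟨i, ⟨hi, hw⟩, rfl⟩
    _ ≤ _ := by rw [Set.ncard_coe_finset]; exact Finset.card_image_le

namespace SimpleGraph

variable {V : Type*} {G H : SimpleGraph V} {a b : V}

namespace Walk

lemma IsTrail.mk_start_snd_notMem_edges_tail {p : G.Walk a b} (hp : p.IsTrail) (hnil : ¬p.Nil) :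
    s(a, p.snd) ∉ p.tail.edges := by
  have := hp.edges_nodup
  rw [← cons_tail_eq p hnil, edges_cons, List.nodup_cons] at this
  exact this.1

lemma IsCycle.eq_snd_or_eq_penultimate_of_mem_edges {c : G.Walk a a} (hc : c.IsCycle)
    (he : s(a, b) ∈ c.edges) : b = c.snd ∨ b = c.penultimate := by
  cases c with
  | nil => simp at hc
  | cons h p =>
    rw [edges_cons, List.mem_cons] at he
    rcases he with he | he
    · exact Or.inl (by rw [Sym2.congr_right.1 he]; simp)
    · right
      rw [penultimate_cons_of_not_nil _ _ (not_nil_of_isCycle_cons hc)]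
      exact ((cons_isCycle_iff p h).1 hc).1.eq_penultimate_of_mem_edges he

variable [DecidableEq V]

lemma IsHamiltonian.of_perm_support {p : G.Walk a b} {a' b' : V} {q : H.Walk a' b'}
    (hp : p.IsHamiltonian) (h : p.support.Perm q.support) : q.IsHamiltonian :=
  fun z => h.count_eq z ▸ hp z

lemma IsHamiltonian.reverse {p : G.Walk a b} (hp : p.IsHamiltonian) : p.reverse.IsHamiltonian :=
  hp.of_perm_support (by simp [(List.reverse_perm _).symm])

lemma IsHamiltonian.transfer {p : G.Walk a b} (hp : p.IsHamiltonian)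
    (hH : ∀ e ∈ p.edges, e ∈ H.edgeSet) : (p.transfer H hH).IsHamiltonian :=
  hp.of_perm_support (q := p.transfer H hH) (by rw [p.support_transfer hH])

variable [Fintype V]

lemma IsHamiltonianCycle.reverse {c : G.Walk a a} (hc : c.IsHamiltonianCycle) :
    c.reverse.IsHamiltonianCycle := by
  rw [isHamiltonianCycle_iff_isCycle_and_length_eq] at hc ⊢
  exact ⟨hc.1.reverse, by rw [length_reverse, hc.2]⟩

lemma IsHamiltonianCycle.transfer {c : G.Walk a a} (hc : c.IsHamiltonianCycle)
    (hH : ∀ e ∈ c.edges, e ∈ H.edgeSet) : (c.transfer H hH).IsHamiltonianCycle := by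
  rw [isHamiltonianCycle_iff_isCycle_and_length_eq] at hc ⊢
  exact ⟨hc.1.transfer hH, by rw [length_transfer, hc.2]⟩

lemma IsHamiltonian.isHamiltonianCycle_cons {p : G.Walk a b} (hp : p.IsHamiltonian)
    (h : G.Adj b a) (hV : 3 ≤ Fintype.card V) : (cons h p).IsHamiltonianCycle := by
  refine ⟨(cons_isCycle_iff p h).2 ⟨hp.isPath, fun he => ?_⟩, hp.of_perm_support (by simp)⟩
  have := hp.isPath.length_eq_one_of_mem_edges (Sym2.eq_swap ▸ he)
  have := hp.length_eq
  omega

lemma IsHamiltonian.exists_adj_getVert_succ_adj_getVert {p : G.Walk a b} (hp : p.IsHamiltonian)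
    (hdeg : Fintype.card V ≤ (G.neighborSet a).ncard + (G.neighborSet b).ncard) :
    ∃ i < p.length, G.Adj a (p.getVert (i + 1)) ∧ G.Adj b (p.getVert i) := by
  classical
  have hS := Set.ncard_le_card_filter_of_subset_image (s := G.neighborSet a)
    (Finset.range p.length) (fun i => p.getVert (i + 1)) fun w hw => by
      obtain ⟨j, rfl, hj⟩ := p.mem_support_iff_exists_getVert.1 (hp.mem_support w)
      obtain _ | i := j
      · simp at hw
      · exact ⟨i, Finset.mem_range.2 hj, rfl⟩
  have hT := Set.ncard_le_card_filter_of_subset_image (s := G.neighborSet b)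
    (Finset.range p.length) (fun i => p.getVert i) fun w hw => by
      obtain ⟨j, rfl, hj⟩ := p.mem_support_iff_exists_getVert.1 (hp.mem_support w)
      refine ⟨j, Finset.mem_range.2 (lt_of_le_of_ne hj fun h => ?_), rfl⟩
      subst h
      simp at hw
  have hlen := hp.length_eq
  have hpos : 0 < Fintype.card V := Fintype.card_pos_iff.2 ⟨a⟩
  obtain ⟨i, hi⟩ := Finset.inter_nonempty_of_card_lt_card_add_card
    (Finset.filter_subset (fun i => p.getVert (i + 1) ∈ G.neighborSet a) (Finset.range p.length))
    (Finset.filter_subset (fun i => p.getVert i ∈ G.neighborSet b) (Finset.range p.length))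
    (by rw [Finset.card_range]; omega)
  simp only [Finset.mem_inter, Finset.mem_filter, Finset.mem_range] at hi
  exact ⟨i, hi.1.1, hi.1.2, hi.2.2⟩

lemma IsHamiltonian.isHamiltonian_of_card_le_ncard_add_ncard {p : G.Walk a b}
    (hp : p.IsHamiltonian) (hV : 3 ≤ Fintype.card V)
    (hdeg : Fintype.card V ≤ (G.neighborSet a).ncard + (G.neighborSet b).ncard) :
    G.IsHamiltonian := by
  obtain ⟨i, hi, ha, hb⟩ := hp.exists_adj_getVert_succ_adj_getVert hdeg
  -- the cycle `a → pᵢ₊₁ → ⋯ → b → pᵢ → ⋯ → a`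
  let q := (p.drop (i + 1)).append (cons hb (p.take i).reverse)
  have hq : q.IsHamiltonian := hp.of_perm_support <| by
    have : q.support = p.support.drop (i + 1) ++ (p.support.take (i + 1)).reverse := by
      simp [q, support_append, support_take, Nat.min_eq_left hi]
    rw [this]
    nth_rw 1 [← List.take_append_drop (i + 1) p.support]
    exact List.perm_append_comm.trans (List.Perm.append_left _ (List.reverse_perm _).symm)
  exact fun _ => ⟨a, cons ha q, hq.isHamiltonianCycle_cons ha hV⟩

end Walk

open Walk

lemma mem_edgeSet_of_mem_edgeSet_sup_edge {e : Sym2 V} (he : e ∈ (G ⊔ edge a b).edgeSet)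
    (hne : e ≠ s(a, b)) : e ∈ G.edgeSet := by
  rw [edgeSet_sup, Set.mem_union] at he
  exact he.resolve_right fun h => hne (edgeSet_edge_subset h)

lemma ncard_neighborSet_eq_degree (G : SimpleGraph V) [Fintype V] [DecidableRel G.Adj] (a : V) :
    (G.neighborSet a).ncard = G.degree a := by
  rw [Set.ncard_eq_toFinset_card', Set.toFinset_card, card_neighborSet_eq_degree]

lemma le_ncard_neighborSet_sup_fromRel [Finite V] {s : Set V} {k : ℕ} (hs : k ≤ s.ncard)
    (hG : ∀ a ∈ s, k ≤ (G.neighborSet a).ncard) (a : V) :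
    k ≤ ((G ⊔ fromRel fun x _ => x ∈ s).neighborSet a).ncard := by
  by_cases ha : a ∈ s
  · exact (hG a ha).trans (Set.ncard_le_ncard fun _ h => le_sup_left (a := G) h)
  · exact hs.trans (Set.ncard_le_ncard fun b hb => Or.inr ⟨fun h => ha (h ▸ hb), .inr hb⟩)

section Closure

variable [Fintype V] [DecidableEq V]

theorem isHamiltonian_of_isHamiltonian_sup_edge (hV : 3 ≤ Fintype.card V)
    (hdeg : Fintype.card V ≤ (G.neighborSet a).ncard + (G.neighborSet b).ncard)
    (hH : (G ⊔ edge a b).IsHamiltonian) : G.IsHamiltonian := by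
  have : Nontrivial V := Fintype.one_lt_card_iff_nontrivial.1 (by omega)
  obtain ⟨c, hc⟩ := hH.exists_isHamiltonianCycle a
  by_cases he : s(a, b) ∈ c.edges
  · obtain ⟨c, hc, hb⟩ : ∃ c : (G ⊔ edge a b).Walk a a, c.IsHamiltonianCycle ∧ c.snd = b := by
      rcases hc.isCycle.eq_snd_or_eq_penultimate_of_mem_edges he with h | h
      exacts [⟨c, hc, h.symm⟩, ⟨c.reverse, hc.reverse, (snd_reverse c).trans h.symm⟩]
    have hG : ∀ e ∈ c.tail.edges, e ∈ G.edgeSet := fun e he' =>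
      mem_edgeSet_of_mem_edgeSet_sup_edge (c.tail.edges_subset_edgeSet he') fun h =>
        hc.isCycle.isTrail.mk_start_snd_notMem_edges_tail hc.isCycle.not_nil
          ((show e = s(a, c.snd) by rw [hb, h]) ▸ he')
    exact (hc.isHamiltonian_tail.transfer hG).isHamiltonian_of_card_le_ncard_add_ncard hV
      (by rwa [hb, add_comm])
  · have hG : ∀ e ∈ c.edges, e ∈ G.edgeSet := fun e he' =>
      mem_edgeSet_of_mem_edgeSet_sup_edge (c.edges_subset_edgeSet he') fun h => he (h ▸ he')
    exact fun _ => ⟨a, c.transfer G hG, hc.transfer hG⟩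

theorem IsHamiltonian.of_ge_of_card_le_ncard_add_ncard {G H : SimpleGraph V}
    (hH : H.IsHamiltonian) (hGH : G ≤ H) (hV : 3 ≤ Fintype.card V)
    (hdeg : ∀ a b, H.Adj a b → ¬G.Adj a b →
      Fintype.card V ≤ (G.neighborSet a).ncard + (G.neighborSet b).ncard) :
    G.IsHamiltonian := by
  by_cases hHG : H ≤ G
  · exact le_antisymm hGH hHG ▸ hH
  obtain ⟨a, b, hab, hnab⟩ : ∃ a b, H.Adj a b ∧ ¬G.Adj a b := by
    simpa [SimpleGraph.le_iff_adj] using hHG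
  have hle : G ≤ G ⊔ edge a b := le_sup_left
  refine isHamiltonian_of_isHamiltonian_sup_edge hV (hdeg a b hab hnab) ?_
  refine IsHamiltonian.of_ge_of_card_le_ncard_add_ncard hH
    (sup_le hGH ((edge_le_iff H).2 (.inr hab))) hV
    fun x y hxy hnxy => (hdeg x y hxy fun h => hnxy (hle h)).trans ?_
  exact add_le_add (Set.ncard_le_ncard fun _ h => hle h) (Set.ncard_le_ncard fun _ h => hle h)
termination_by (H.edgeSet \ G.edgeSet).ncard
decreasing_by
  refine Set.ncard_lt_ncard ⟨Set.sdiff_subset_sdiff_right (edgeSet_mono hle), fun h => ?_⟩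
  have : s(a, b) ∈ H.edgeSet \ (G ⊔ edge a b).edgeSet := h ⟨hab, hnab⟩
  exact this.2 (Or.inr ((edge_adj ..).2 ⟨.inl ⟨rfl, rfl⟩, hab.ne⟩))

theorem isHamiltonian_top (hV : 3 ≤ Fintype.card V) : (⊤ : SimpleGraph V).IsHamiltonian := by
  obtain ⟨m, hm⟩ := Nat.exists_eq_add_of_le' hV
  let e := (Fintype.equivFinOfCardEq hm).symm
  let f : cycleGraph (m + 3) →g (⊤ : SimpleGraph V) := ⟨e, fun h => e.injective.ne h.ne⟩
  have hc : (cycleGraph.cycle m).IsHamiltonianCycle :=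
    isHamiltonianCycle_iff_isCycle_and_length_eq.2
      ⟨cycleGraph.isCycle_cycle, by simp [cycleGraph.length_cycle]⟩
  exact fun _ => ⟨_, _, hc.map (f := f) e.bijective⟩

end Closure

/-- `G` with a new vertex `none` adjacent exactly to `some u` and `some v`: its Hamilton cycles
are the Hamilton `u`-`v` paths of `G` closed up through `none`. -/
def withApex (G : SimpleGraph V) (u v : V) : SimpleGraph (Option V) where
  Adj x y := match x, y with
    | some a, some b => G.Adj a b
    | some a, none | none, some a => a = u ∨ a = v
    | none, none => False
  symm := ⟨by
    rintro (_ | a) (_ | b) h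
    exacts [h, h, h, h.symm]⟩
  loopless := ⟨by rintro (_ | a) h; exacts [h, G.irrefl h]⟩

section withApex

variable {u v : V}

@[simp] lemma withApex_adj_some_some : (G.withApex u v).Adj (some a) (some b) ↔ G.Adj a b :=
  Iff.rfl

lemma withApex_adj_none {x : Option V} :
    (G.withApex u v).Adj none x ↔ x = some u ∨ x = some v := by
  cases x <;> simp [withApex]

lemma withApex_mono (h : G ≤ H) : G.withApex u v ≤ H.withApex u v := by
  rintro (_ | a) (_ | b) hab
  exacts [hab, hab, hab, h hab]

lemma ncard_neighborSet_le_ncard_neighborSet_withApex [Finite V] (a : V) :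
    (G.neighborSet a).ncard ≤ ((G.withApex u v).neighborSet (some a)).ncard := by
  rw [← Set.ncard_image_of_injective _ (Option.some_injective V)]
  exact Set.ncard_le_ncard (by rintro _ ⟨b, hb, rfl⟩; exact hb)

lemma two_le_ncard_neighborSet_withApex_none [Finite V] (huv : u ≠ v) :
    2 ≤ ((G.withApex u v).neighborSet none).ncard := by
  rw [← Set.ncard_pair (Option.some_injective V |>.ne huv)]
  exact Set.ncard_le_ncard (by rintro _ (rfl | rfl) <;> simp [withApex_adj_none])

lemma exists_support_map_some_eq_of_withApex {x y : Option V} (p : (G.withApex u v).Walk x y) :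
    ∀ {a b : V}, x = some a → y = some b → none ∉ p.support →
      ∃ q : G.Walk a b, q.support.map some = p.support := by
  induction p with
  | nil => rintro a b rfl ⟨⟩ -; exact ⟨nil, rfl⟩
  | @cons x w y h p ih =>
    rintro a b rfl rfl hnone
    rw [support_cons, List.mem_cons, not_or] at hnone
    obtain ⟨c, rfl⟩ := Option.ne_none_iff_exists'.1 fun hw => hnone.2 (hw ▸ p.start_mem_support)
    obtain ⟨q, hq⟩ := ih rfl rfl hnone.2
    exact ⟨cons h q, show some a :: q.support.map some = _ by rw [hq]; rfl⟩

variable [Fintype V] [DecidableEq V]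

theorem exists_isHamiltonian_of_isHamiltonian_withApex (h : (G.withApex u v).IsHamiltonian) :
    ∃ p : G.Walk u v, p.IsHamiltonian := by
  have : Nonempty V := ⟨u⟩
  obtain ⟨c, hc⟩ := h.exists_isHamiltonianCycle none
  obtain _ | @⟨_, w, _, hw, p⟩ := c
  · exact absurd hc.isCycle not_isCycle_nil
  have hp : p.IsHamiltonian := hc.isHamiltonian_tail.of_perm_support (by simp)
  have hnil : ¬p.Nil := not_nil_of_isCycle_cons hc.isCycle
  have hne : w ≠ p.penultimate := by
    simpa [penultimate_cons_of_not_nil _ _ hnil] using hc.isCycle.snd_ne_penultimate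
  have hcount (x : Option V) : (p.dropLast.support ++ [none]).count x = 1 := by
    -- `convert` identifies the two `BEq (Option V)` instances in play
    rw [support_dropLast_concat hnil]; convert hp x
  have hnone : none ∉ p.dropLast.support := by
    simpa [List.count_eq_zero] using hcount none
  have key (a b : V) (ha : w = some a) (hb : p.penultimate = some b) :
      ∃ q : G.Walk a b, q.IsHamiltonian := by
    obtain ⟨q, hq⟩ := exists_support_map_some_eq_of_withApex p.dropLast ha hb hnone
    refine ⟨q, fun z => ?_⟩
    simpa [← hq, List.count_map_of_injective _ _ (Option.some_injective V)] using hcount (some z)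
  rcases withApex_adj_none.1 hw with hw | hw <;>
    rcases withApex_adj_none.1 (adj_penultimate hnil).symm with hp' | hp'
  · exact absurd (hw.trans hp'.symm) hne
  · exact key u v hw hp'
  · obtain ⟨q, hq⟩ := key v u hw hp'
    exact ⟨q.reverse, hq.reverse⟩
  · exact absurd (hw.trans hp'.symm) hne

theorem isHamiltonian_withApex_top (huv : u ≠ v) :
    ((⊤ : SimpleGraph V).withApex u v).IsHamiltonian := by
  have hV : 2 ≤ Fintype.card V := Fintype.one_lt_card_iff.2 ⟨u, v, huv⟩
  have hcard : Fintype.card (Option V) = Fintype.card V + 1 := Fintype.card_option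
  refine (isHamiltonian_top (by omega)).of_ge_of_card_le_ncard_add_ncard le_top (by omega) ?_
  have hnone := two_le_ncard_neighborSet_withApex_none (G := ⊤) huv
  have hsome (a : V) :
      Fintype.card V - 1 ≤ (((⊤ : SimpleGraph V).withApex u v).neighborSet (some a)).ncard := by
    refine le_of_eq_of_le ?_ (ncard_neighborSet_le_ncard_neighborSet_withApex a)
    rw [neighborSet_top, Set.ncard_compl, Set.ncard_singleton, Nat.card_eq_fintype_card]
  rintro (_ | a) (_ | b) hab hnab
  · exact absurd rfl hab.ne
  · have := hsome b; omega
  · have := hsome a; omega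
  · exact absurd (by simpa using hab) hnab

theorem isHamiltonian_withApex_of_le [Nontrivial V] (hGH : G ≤ H)
    (hH : (H.withApex u v).IsHamiltonian)
    (hdeg : ∀ a b, H.Adj a b → ¬G.Adj a b →
      Fintype.card V + 1 ≤ (G.neighborSet a).ncard + (G.neighborSet b).ncard) :
    (G.withApex u v).IsHamiltonian := by
  have hV : 1 < Fintype.card V := Fintype.one_lt_card
  refine hH.of_ge_of_card_le_ncard_add_ncard (withApex_mono hGH)
    (by rw [Fintype.card_option]; omega) ?_
  rintro (_ | a) (_ | b) hab hnab
  · exact absurd hab (by simp [withApex])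
  · exact absurd hab hnab
  · exact absurd hab hnab
  · rw [Fintype.card_option]
    exact (hdeg a b hab hnab).trans (add_le_add
      (ncard_neighborSet_le_ncard_neighborSet_withApex a)
      (ncard_neighborSet_le_ncard_neighborSet_withApex b))

end withApex

end SimpleGraph

open SimpleGraph

theorem hamilton_path_many_large_degrees_even_general (n : ℕ) (hne : Even n)
    (G : SimpleGraph (Fin n)) [DecidableRel G.Adj]
    (hδ : n / 2 ≤ G.minDegree)
    (hbig : n / 2 < (Finset.univ.filter (fun v => n / 2 + 1 ≤ G.degree v)).card)
    (u v : Fin n) (huv : u ≠ v) :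
    ∃ p : G.Walk u v, p.IsHamiltonian := by
  set B := Finset.univ.filter (fun v => n / 2 + 1 ≤ G.degree v)
  have : Nontrivial (Fin n) := ⟨u, v, huv⟩
  have hn : n / 2 + n / 2 = n := by obtain ⟨k, rfl⟩ := hne; omega
  have hmin (a : Fin n) : n / 2 ≤ (G.neighborSet a).ncard :=
    G.ncard_neighborSet_eq_degree a ▸ hδ.trans (G.minDegree_le_degree a)
  have hB (a : Fin n) (ha : a ∈ B) : n / 2 + 1 ≤ (G.neighborSet a).ncard :=
    G.ncard_neighborSet_eq_degree a ▸ (Finset.mem_filter.1 ha).2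
  let G₂ := G ⊔ fromRel fun a _ => a ∈ (B : Set (Fin n))
  have hdeg₂ : ∀ a, n / 2 + 1 ≤ (G₂.neighborSet a).ncard :=
    le_ncard_neighborSet_sup_fromRel (by rwa [Set.ncard_coe_finset]) hB
  have h₂ : (G₂.withApex u v).IsHamiltonian :=
    isHamiltonian_withApex_of_le le_top (isHamiltonian_withApex_top huv) fun a b _ _ => by
      have := hdeg₂ a; have := hdeg₂ b; rw [Fintype.card_fin]; omega
  refine exists_isHamiltonian_of_isHamiltonian_withApex <|
    isHamiltonian_withApex_of_le le_sup_left h₂ fun a b hab hnab => ?_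
  have := hmin a; have := hmin b
  rw [Fintype.card_fin]
  simp only [sup_adj, fromRel_adj, hnab, false_or] at hab
  rcases hab.2 with h | h
  · have := hB a h; omega
  · have := hB b h; omega

/-- **Lemma (part 1).** Let `n ≥ 3` be even and `G` an `n`-vertex graph with
`δ(G) ≥ n/2`. If more than `n/2` vertices have degree at least `n/2 + 1`, then
for every pair of vertices `u, v` there is a Hamilton `{u,v}`-path. -/
theorem hamilton_path_many_large_degrees_even (n : ℕ) (hn : 3 ≤ n) (hne : Even n)
    (G : SimpleGraph (Fin n)) [DecidableRel G.Adj]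
    (hδ : n / 2 ≤ G.minDegree)
    (hbig : n / 2 < (Finset.univ.filter (fun v => n / 2 + 1 ≤ G.degree v)).card)
    (u v : Fin n) (huv : u ≠ v) :
    ∃ p : G.Walk u v, p.IsHamiltonian :=
  hamilton_path_many_large_degrees_even_general n hne G hδ hbig u v huv
end

section
/- Let n be an even integer, let G be an n-vertex graph whose edges are colored with 2 colors by χ, and suppose V(G) admits a partition V(G) = A ⊔ B such that: for any two distinct vertices x, y lying in the same part, χ(xu) = χ(yu) for every common neighbor u of x and y; and for any two vertices x, y lying in different parts, χ(xu) ≠ χ(yu) for every common neighbor u of x and y. Then every Hamilton cycle of G is even-chromatic. -/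
/-!
Let `F` be the indicator of `A` and fix a colour `c`. Switching the indicator of the colour
class `c` at `F`, i.e. `ψ(xy) = [χ(xy) = c] + F x + F y` in `ZMod 2`, gives by the agreement
and disagreement conditions a colouring that is the same on all edges at any vertex, hence
constant along a Hamilton cycle; as the cycle has even length, `ψ` sums to `0` over it. The
switching terms cancel around a closed walk, so the number of edges of colour `c` is even.
-/

namespace SimpleGraph.Walk

variable {V : Type*} {G : SimpleGraph V}

theorem sum_darts_snd_sub_fst {M : Type*} [AddCommGroup M] (f : V → M) {u v : V}
    (w : G.Walk u v) : (w.darts.map fun d => f d.snd - f d.fst).sum = f v - f u := by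
  induction w with
  | nil => simp
  | cons _ _ ih => simp only [darts_cons, List.map_cons, List.sum_cons, ih]; abel

theorem sum_darts_eq_length_nsmul {M : Type*} [AddMonoid M] {g : G.Dart → M}
    (hg : ∀ d d', G.DartAdj d d' → g d = g d') {u v : V} (w : G.Walk u v) {d₀ : G.Dart}
    (hd₀ : d₀ ∈ w.darts) : (w.darts.map g).sum = w.length • g d₀ := by
  have hpw : w.darts.Pairwise fun d d' => g d = g d' :=
    List.isChain_iff_pairwise.mp (w.isChain_dartAdj_darts.imp hg)
  have hconst : ∀ d ∈ w.darts, g d = g d₀ := fun d hd => by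
    by_cases h : d = d₀
    · rw [h]
    · exact hpw.forall hd hd₀ h
  rw [List.map_congr_left hconst, List.map_const', List.sum_replicate, length_darts]

theorem sum_edges_eq_zero_of_switching {ψ : Sym2 V → ZMod 2} (F : V → ZMod 2)
    (hψ : ∀ x y u, G.Adj x u → G.Adj y u → ψ s(x, u) + F x = ψ s(y, u) + F y)
    {a : V} (w : G.Walk a a) (hw : Even w.length) : (w.edges.map ψ).sum = 0 := by
  set g : G.Dart → ZMod 2 := fun d => ψ d.edge + F d.fst + F d.snd
  have hg : ∀ d d', G.DartAdj d d' → g d = g d' := by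
    rintro ⟨⟨x, u⟩, hxu⟩ ⟨⟨u', y⟩, huy⟩ (rfl : u = u')
    have := hψ x y u hxu huy.symm
    simp only [g, Dart.edge_mk, Sym2.eq_swap (a := u)]
    linear_combination this
  have hsum_g : (w.darts.map g).sum = 0 := by
    cases w with
    | nil => rfl
    | cons h p =>
      rw [sum_darts_eq_length_nsmul hg _ (List.mem_cons_self ..), nsmul_eq_mul,
        ZMod.natCast_eq_zero_iff_even.mpr hw, zero_mul]
  have hψg : ∀ d : G.Dart, ψ d.edge = g d + (F d.snd - F d.fst) := fun d => by
    simp only [g, CharTwo.sub_eq_add]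
    ring_nf
    reduce_mod_char
  rw [edges, List.map_map, List.map_congr_left (f := ψ ∘ Dart.edge) fun d _ => hψg d,
    List.sum_map_add, hsum_g, sum_darts_snd_sub_fst, sub_self, add_zero]

end SimpleGraph.Walk

theorem Fin.ite_eq_ite_add_one_of_ne {i j : Fin 2} (h : i ≠ j) (c : Fin 2) :
    (if i = c then 1 else 0 : ZMod 2) = (if j = c then 1 else 0) + 1 := by
  revert i j c; decide

theorem List.sum_map_ite_one_zero_eq_length_filter {α R : Type*} [AddCommMonoidWithOne R]
    (p : α → Prop) [DecidablePred p] (l : List α) :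
    (l.map fun e => if p e then (1 : R) else 0).sum = (l.filter (p ·)).length := by
  simp [List.sum_map_ite]

variable {V : Type*} {G : SimpleGraph V}

theorem color_indicator_switch_eq_of_agreement_partition (χ : Sym2 V → Fin 2) {A B : Set V}
    [DecidablePred (· ∈ A)]
    (hpart : ∀ v, (v ∈ A ∧ v ∉ B) ∨ (v ∈ B ∧ v ∉ A))
    (hagree : ∀ x y : V, x ≠ y → ((x ∈ A ∧ y ∈ A) ∨ (x ∈ B ∧ y ∈ B)) →
      ∀ u, G.Adj x u → G.Adj y u → χ s(x, u) = χ s(y, u))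
    (hdisagree : ∀ x y : V, ((x ∈ A ∧ y ∈ B) ∨ (x ∈ B ∧ y ∈ A)) →
      ∀ u, G.Adj x u → G.Adj y u → χ s(x, u) ≠ χ s(y, u))
    (c : Fin 2) (x y u : V) (hx : G.Adj x u) (hy : G.Adj y u) :
    (if χ s(x, u) = c then 1 else 0 : ZMod 2) + (if x ∈ A then 1 else 0) =
      (if χ s(y, u) = c then 1 else 0) + (if y ∈ A then 1 else 0) := by
  have hB : ∀ v, v ∈ B ↔ v ∉ A := fun v => by rcases hpart v with h | h <;> tauto
  obtain rfl | hxy := eq_or_ne x y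
  · rfl
  by_cases hxA : x ∈ A <;> by_cases hyA : y ∈ A
  · simp [hxA, hyA, hagree x y hxy (.inl ⟨hxA, hyA⟩) u hx hy]
  · have hne := hdisagree x y (.inl ⟨hxA, (hB y).2 hyA⟩) u hx hy
    simp [hxA, hyA, Fin.ite_eq_ite_add_one_of_ne hne c, add_assoc, CharTwo.add_self_eq_zero]
  · have hne := hdisagree x y (.inr ⟨(hB x).2 hxA, hyA⟩) u hx hy
    simp [hxA, hyA, Fin.ite_eq_ite_add_one_of_ne hne c]
  · simp [hxA, hyA, hagree x y hxy (.inr ⟨(hB x).2 hxA, (hB y).2 hyA⟩) u hx hy]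

/-- If `n` is even and the vertex set of a 2-edge-colored `n`-vertex graph `G`
can be partitioned into parts `A ⊔ B` so that vertices in the same part agree
(`χ(xu) = χ(yu)` for every common neighbor `u`) and vertices in different
parts disagree (`χ(xu) ≠ χ(yu)` for every common neighbor `u`), then every
Hamilton cycle of `G` is even-chromatic. -/
theorem even_hamilton_of_agreement_partition (n : ℕ) (hne : Even n)
    (G : SimpleGraph (Fin n)) (χ : Sym2 (Fin n) → Fin 2)
    (A B : Set (Fin n))
    (hpart : ∀ v, (v ∈ A ∧ v ∉ B) ∨ (v ∈ B ∧ v ∉ A))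
    (hagree : ∀ x y : Fin n, x ≠ y → ((x ∈ A ∧ y ∈ A) ∨ (x ∈ B ∧ y ∈ B)) →
      ∀ u, G.Adj x u → G.Adj y u → χ s(x, u) = χ s(y, u))
    (hdisagree : ∀ x y : Fin n, ((x ∈ A ∧ y ∈ B) ∨ (x ∈ B ∧ y ∈ A)) →
      ∀ u, G.Adj x u → G.Adj y u → χ s(x, u) ≠ χ s(y, u)) :
    ∀ (a : Fin n) (w : G.Walk a a), w.IsHamiltonianCycle →
      ∀ c : Fin 2, Even ((w.edges.filter (fun e => χ e = c)).length) := by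
  classical
  intro a w hw c
  have hlen : Even w.length := by rwa [hw.length_eq, Fintype.card_fin]
  have hsum := w.sum_edges_eq_zero_of_switching (ψ := fun e => if χ e = c then 1 else 0)
    (fun v => if v ∈ A then 1 else 0)
    (color_indicator_switch_eq_of_agreement_partition χ hpart hagree hdisagree c) hlen
  rw [List.sum_map_ite_one_zero_eq_length_filter] at hsum
  exact ZMod.natCast_eq_zero_iff_even.mp hsum
end

section
/- Let n ≥ 4 be an even integer. Then the unique-Ramsey number of Hamilton paths satisfies r_u(n, P_n) ≤ n/2 + 1; that is, there exists an edge-coloring of the complete graph K_n with n/2 + 1 colors under which every Hamilton path of K_n contains some color occurring exactly once. -/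
/-!
Split the `2k + 2` vertices into `k` centers and `k + 2` others; an edge with exactly one center
endpoint `a` gets color `a`, every other edge a common extra color. On a Hamilton path a center
color occurs at most twice, since all its edges contain the center. If no color occurred exactly
once, a missing center color would spread along the path to every vertex, impossible as there are
non-centers; so each center color occurs twice, and the extra color on the remaining
`(2k + 1) - 2k = 1` edge.
-/

open Finset

theorem List.countP_lt_countP {α : Type*} {p q : α → Bool} {l : List α}
    (hpq : ∀ x ∈ l, p x → q x) {a : α} (ha : a ∈ l) (hqa : q a) (hpa : ¬p a) :
    l.countP p < l.countP q := by
  induction l with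
  | nil => cases ha
  | cons b l ih =>
    have hpq' : ∀ x ∈ l, p x → q x := fun x hx => hpq x (.tail _ hx)
    rcases List.mem_cons.1 ha with rfl | ha
    · have := List.countP_mono_left hpq'
      simp [hqa, hpa]
      omega
    · have := ih hpq' ha
      have := hpq b (.head _)
      simp only [List.countP_cons]
      grind

theorem List.count_map_eq_countP {α β : Type*} [DecidableEq β] (l : List α) (f : α → β) (c : β) :
    (l.map f).count c = l.countP (f · = c) := by
  rw [List.count_eq_countP, List.countP_map]
  rfl

theorem List.exists_countP_comp_eq_one {α β γ : Type*} [DecidableEq β] [DecidableEq γ]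
    {l : List α} {f : α → β} {g : β → γ} (hg : Set.InjOn g (Set.range f))
    (h : ∃ c, l.countP (f · = c) = 1) : ∃ c, l.countP (fun x => g (f x) = c) = 1 := by
  obtain ⟨c, hc⟩ := h
  obtain ⟨a, -, hac⟩ := List.countP_pos_iff.1 (hc ▸ Nat.one_pos)
  refine ⟨g c, hc ▸ List.countP_congr fun x _ => ?_⟩
  simpa [← of_decide_eq_true hac] using hg.eq_iff (Set.mem_range_self x) (Set.mem_range_self a)

theorem Fin.injOn_min_elim_val {m k : ℕ} :
    Set.InjOn (fun c : Option (Fin m) => min (c.elim k Fin.val) k) {c | ∀ a ∈ c, a.val < k} := by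
  rintro (_ | a) ha (_ | b) hb h <;>
    simp only [Set.mem_ofPred_eq, Option.mem_def, Option.some.injEq, forall_eq', Option.elim]
      at ha hb h ⊢ <;>
    grind

namespace SimpleGraph.Walk

variable {V : Type*} {G : SimpleGraph V}

theorem forall_mem_support_or_forall_notMem {u v : V} (p : G.Walk u v) {Z : Set V}
    (hZ : ∀ x y, s(x, y) ∈ p.edges → x ∈ Z → y ∈ Z) :
    (∀ x ∈ p.support, x ∈ Z) ∨ ∀ x ∈ p.support, x ∉ Z := by
  induction p with
  | @nil u => by_cases hu : u ∈ Z <;> simp [hu]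
  | @cons u w v h q ih =>
    have huw : u ∈ Z ↔ w ∈ Z := ⟨hZ u w (by simp), hZ w u (by simp [Sym2.eq_swap])⟩
    simp only [support_cons, List.forall_mem_cons, huw]
    rcases ih (fun x y hxy => hZ x y (by simp [hxy])) with hq | hq
    · exact .inl ⟨hq w q.start_mem_support, hq⟩
    · exact .inr ⟨hq w q.start_mem_support, hq⟩

variable [DecidableEq V]

theorem IsPath.countP_start_mem_edges_le_one {u v : V} {p : G.Walk u v} (hp : p.IsPath) :
    p.edges.countP (u ∈ ·) ≤ 1 := by
  cases p with
  | nil => simp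
  | cons h q =>
    have hu := ((cons_isPath_iff _ _).1 hp).2
    have h0 : q.edges.countP (u ∈ ·) = 0 :=
      List.countP_eq_zero.2 fun e he hue => hu (q.mem_support_of_mem_edges he (by simpa using hue))
    simp [h0]

theorem IsPath.countP_mem_edges_le_two {u v : V} {p : G.Walk u v} (hp : p.IsPath) (x : V) :
    p.edges.countP (x ∈ ·) ≤ 2 := by
  induction p with
  | nil => simp
  | @cons u w v h q ih =>
    have hq := ((cons_isPath_iff _ _).1 hp).1
    by_cases hxu : x = u
    · subst hxu
      exact hp.countP_start_mem_edges_le_one.trans (by norm_num)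
    by_cases hxw : x = w
    · have := hq.countP_start_mem_edges_le_one
      subst hxw
      simp only [edges_cons, List.countP_cons, Sym2.mem_mk_right, decide_true, if_true]
      omega
    · simpa [List.countP_cons, hxu, hxw] using ih hq

end SimpleGraph.Walk

namespace SimpleGraph

variable {V : Type*} [DecidableEq V]

def crossColor (C : Finset V) : Sym2 V → Option V :=
  Sym2.lift ⟨fun a b => if a ∈ C ∧ b ∉ C then some a else if b ∈ C ∧ a ∉ C then some b else none,
    fun a b => by grind⟩

variable {C : Finset V} {a b : V}

theorem crossColor_mk_of_mem_of_notMem (ha : a ∈ C) (hb : b ∉ C) :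
    crossColor C s(a, b) = some a := by
  simp [crossColor, ha, hb]

theorem crossColor_mk_of_mem_of_mem (ha : a ∈ C) (hb : b ∈ C) : crossColor C s(a, b) = none := by
  simp [crossColor, ha, hb]

theorem mem_and_mem_of_crossColor_eq_some {e : Sym2 V} (h : crossColor C e = some a) :
    a ∈ e ∧ a ∈ C := by
  induction e using Sym2.ind with
  | _ x y => simp only [crossColor, Sym2.lift_mk] at h; split_ifs at h <;> simp_all

theorem range_crossColor_subset : Set.range (crossColor C) ⊆ {c | ∀ a ∈ c, a ∈ C} := by
  rintro _ ⟨e, rfl⟩ a ha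
  exact (mem_and_mem_of_crossColor_eq_some ha).2

namespace Walk

variable {G : SimpleGraph V} {u v : V} {p : G.Walk u v}

theorem IsPath.countP_crossColor_some_le_two (hp : p.IsPath) (C : Finset V) (x : V) :
    p.edges.countP (crossColor C · = some x) ≤ 2 :=
  (List.countP_mono_left fun _ _ he => by
    simpa using (mem_and_mem_of_crossColor_eq_some (by simpa using he)).1).trans
    (hp.countP_mem_edges_le_two x)

/-- `y` must be a center, so the edge `xy` has color `none` and at most one path edge at `y`
is left to carry the color of `y`. -/
theorem IsPath.mem_and_countP_crossColor_eq_zero (hp : p.IsPath) {x y : V}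
    (hxy : s(x, y) ∈ p.edges) (hx : x ∈ C) (hx0 : p.edges.countP (crossColor C · = some x) = 0)
    (hy1 : p.edges.countP (crossColor C · = some y) ≠ 1) :
    y ∈ C ∧ p.edges.countP (crossColor C · = some y) = 0 := by
  have hy : y ∈ C := by
    by_contra hy
    exact (List.countP_pos_iff.2 ⟨_, hxy, by simp [crossColor_mk_of_mem_of_notMem hx hy]⟩).ne' hx0
  have hlt : p.edges.countP (crossColor C · = some y) < p.edges.countP (y ∈ ·) :=
    List.countP_lt_countP (fun e _ he => by
      simpa using (mem_and_mem_of_crossColor_eq_some (by simpa using he)).1) hxy (by simp)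
      (by simp [crossColor_mk_of_mem_of_mem hx hy])
  have := hp.countP_mem_edges_le_two y
  exact ⟨hy, by omega⟩

theorem IsHamiltonian.countP_crossColor_some_ne_zero (hp : p.IsHamiltonian) {x y : V}
    (hx : x ∈ C) (hy : y ∉ C) (hne : ∀ z, p.edges.countP (crossColor C · = some z) ≠ 1) :
    p.edges.countP (crossColor C · = some x) ≠ 0 := by
  intro hx0
  let Z : Set V := {z | z ∈ C ∧ p.edges.countP (crossColor C · = some z) = 0}
  have hZ : ∀ z z', s(z, z') ∈ p.edges → z ∈ Z → z' ∈ Z := fun _ _ hzz' ⟨hz, hz0⟩ =>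
    hp.isPath.mem_and_countP_crossColor_eq_zero hzz' hz hz0 (hne _)
  have hall := (p.forall_mem_support_or_forall_notMem hZ).resolve_right
    fun h => h x (hp.mem_support x) ⟨hx, hx0⟩
  exact hy (hall y (hp.mem_support y)).1

theorem IsHamiltonian.exists_countP_crossColor_eq_one [Fintype V] (hp : p.IsHamiltonian)
    (hC : Fintype.card V = 2 * #C + 2) : ∃ c, p.edges.countP (crossColor C · = c) = 1 := by
  by_contra! hne
  obtain ⟨y, -, hy⟩ := exists_mem_notMem_of_card_lt_card (s := C) (t := univ)
    (by rw [card_univ]; omega)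
  have hcount_two (x : V) (hx : x ∈ C) : p.edges.countP (crossColor C · = some x) = 2 := by
    have := hp.countP_crossColor_some_ne_zero hx hy fun z => hne (some z)
    have := hp.isPath.countP_crossColor_some_le_two C x
    have := hne (some x)
    omega
  have hsum : p.edges.countP (crossColor C · = none) + 2 * #C = Fintype.card V - 1 := by
    have hcolors : ∀ c ∈ (p.edges.map (crossColor C) : Multiset (Option V)), c ∈ insertNone C := by
      simp only [Multiset.mem_coe, List.mem_map, mem_insertNone]
      rintro c ⟨e, -, rfl⟩
      exact range_crossColor_subset ⟨e, rfl⟩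
    have := Multiset.sum_count_eq_card hcolors
    simp only [sum_insertNone, Multiset.coe_count, List.count_map_eq_countP, Multiset.coe_card,
      List.length_map, length_edges, hp.length_eq] at this
    rwa [sum_congr rfl hcount_two, sum_const, smul_eq_mul, mul_comm] at this
  exact hne none (by omega)

end Walk

end SimpleGraph

open SimpleGraph

/-- **Proposition.** For even `n ≥ 4`, `r_u(n, P_n) ≤ n/2 + 1`: there is an
edge-coloring of `K_n` with `n/2 + 1` colors under which every Hamilton path
has some color occurring exactly once. -/
theorem unique_ramsey_hamilton_path_upper (n : ℕ) (hn : 4 ≤ n) (hne : Even n) :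
    ∃ χ : Sym2 (Fin n) → Fin (n / 2 + 1),
      ∀ (u v : Fin n) (w : (⊤ : SimpleGraph (Fin n)).Walk u v), w.IsHamiltonian →
        ∃ c, (w.edges.filter (fun e => χ e = c)).length = 1 := by
  obtain ⟨k, rfl⟩ : ∃ k, n = 2 * k + 2 := by
    obtain ⟨r, hr⟩ := hne
    exact ⟨r - 1, by omega⟩
  let C : Finset (Fin (2 * k + 2)) := {a | a.val < k}
  have hC : Fintype.card (Fin (2 * k + 2)) = 2 * #C + 2 := by
    simp [C, Fin.card_filter_val_lt]
    omega
  -- the `min` only matters off the range of `crossColor`, which is `none` and centers `a < k`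
  let label : Option (Fin (2 * k + 2)) → Fin ((2 * k + 2) / 2 + 1) :=
    fun c => ⟨min (c.elim k Fin.val) k, by omega⟩
  have hrange : Set.range (crossColor C) ⊆ {c | ∀ a ∈ c, a.val < k} :=
    fun c hc a ha => by simpa [C] using range_crossColor_subset hc a ha
  have hlabel : Set.InjOn label (Set.range (crossColor C)) :=
    Set.InjOn.of_comp (g := Fin.val) (Fin.injOn_min_elim_val.mono hrange)
  refine ⟨fun e => label (crossColor C e), fun u v w hw => ?_⟩
  simpa only [← List.countP_eq_length_filter] using
    List.exists_countP_comp_eq_one hlabel (hw.exists_countP_crossColor_eq_one hC)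
end
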